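/- arXiv:1510.07349 — 4 statements merged into one kernel-verified Lean document; each statement's English description precedes it below -/
import Mathlib

section
/- Let α ∈ (0, 1/2) and C > 0, and let {a_n}_{n∈ℤ} be a bounded sequence of positive reals with a_n ≥ C(1+|n|)^{−α} for all n. Then for every d > 0 and λ > 0 one has Σ_{n∈ℤ} a_n^{−1/2} · exp( −d · Σ_{j=1}^{⌊(|n|−1)/2⌋} min{ a_{(sgn n)·2j}², a_{(sgn n)·(2j−1)}², λ } ) < ∞. -/
open Real Filter Asymptotics


lemma my_tendsto_aux (s c β : ℝ) (hc : 0 < c) (hβ : 0 < β) :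
    Tendsto (fun x : ℝ => x ^ s * Real.exp (-(c * x ^ β))) atTop (nhds 0) := by
  have h := (tendsto_rpow_mul_exp_neg_mul_atTop_nhds_zero (s / β) c hc).comp
      (tendsto_rpow_atTop hβ)
  refine h.congr' ?_
  filter_upwards [eventually_ge_atTop (0:ℝ)] with x hx
  have hβ' : β ≠ 0 := ne_of_gt hβ
  simp only [Function.comp]
  rw [← Real.rpow_mul hx, neg_mul]
  congr 2
  field_simp

lemma my_summable_aux (s c β : ℝ) (hc : 0 < c) (hβ : 0 < β) :
    Summable (fun k : ℕ => (1 + (k : ℝ)) ^ s * Real.exp (-(c * (1 + (k : ℝ)) ^ β))) := by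
  have hsum : Summable (fun k : ℕ => (k : ℝ) ^ (-2 : ℝ)) :=
    Real.summable_nat_rpow.mpr (by norm_num)
  refine summable_of_isBigO_nat hsum ?_
  rw [isBigO_iff]
  refine ⟨1, ?_⟩
  have hev := (my_tendsto_aux (s + 2) c β hc hβ).eventually (eventually_le_nhds zero_lt_one)
  rw [eventually_atTop] at hev
  obtain ⟨X, hX⟩ := hev
  filter_upwards [eventually_ge_atTop (⌈X⌉₊ + 1)] with k hk
  have hk1 : (1 : ℝ) ≤ (k : ℝ) := by exact_mod_cast (by omega : 1 ≤ k)
  have hkpos : (0 : ℝ) < (k : ℝ) := by linarith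
  have hx1 : (1 : ℝ) ≤ 1 + (k : ℝ) := by linarith
  have hxpos : (0 : ℝ) < 1 + (k : ℝ) := by linarith
  have hXle : X ≤ 1 + (k : ℝ) := by
    have : X ≤ (⌈X⌉₊ : ℝ) := Nat.le_ceil X
    have h2 : ((⌈X⌉₊ : ℕ) : ℝ) ≤ (k : ℝ) := by exact_mod_cast (by omega : ⌈X⌉₊ ≤ k)
    linarith
  have key := hX (1 + (k : ℝ)) hXle
  have hsplit : (1 + (k : ℝ)) ^ s = (1 + (k : ℝ)) ^ (s + 2) * (1 + (k : ℝ)) ^ (-2 : ℝ) := by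
    rw [← Real.rpow_add hxpos]; ring_nf
  have hmono : (1 + (k : ℝ)) ^ (-2 : ℝ) ≤ (k : ℝ) ^ (-2 : ℝ) :=
    Real.rpow_le_rpow_of_nonpos hkpos (by linarith) (by norm_num)
  have hnn : (0:ℝ) ≤ (1 + (k : ℝ)) ^ s * Real.exp (-(c * (1 + (k : ℝ)) ^ β)) := by positivity
  rw [Real.norm_of_nonneg hnn, Real.norm_of_nonneg (by positivity), one_mul]
  calc (1 + (k : ℝ)) ^ s * Real.exp (-(c * (1 + (k : ℝ)) ^ β))
      = ((1 + (k : ℝ)) ^ (s + 2) * Real.exp (-(c * (1 + (k : ℝ)) ^ β))) *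
        (1 + (k : ℝ)) ^ (-2 : ℝ) := by rw [hsplit]; ring
    _ ≤ 1 * (k : ℝ) ^ (-2 : ℝ) := by
        apply mul_le_mul key hmono (by positivity) zero_le_one
    _ = (k : ℝ) ^ (-2 : ℝ) := one_mul _


/-- Any bounded sequence `a : ℤ → ℝ` of positive reals with `a n ≥ C (1+|n|)^{-α}` for some
`C > 0` and `α ∈ (0, 1/2)` satisfies the Kunz–Souillard summability condition for every
`d > 0` and `λ > 0`. -/
theorem summability_condition_of_power_lower_bound
    (α C : ℝ) (hα0 : 0 < α) (hα : α < 1/2) (hC : 0 < C)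
    (a : ℤ → ℝ) (hpos : ∀ n, 0 < a n) (hbdd : ∃ M : ℝ, ∀ n, a n ≤ M)
    (hlow : ∀ n : ℤ, C * (1 + |(n : ℝ)|) ^ (-α) ≤ a n)
    (d lam : ℝ) (hd : 0 < d) (hlam : 0 < lam) :
    Summable (fun n : ℤ => (a n) ^ (-(1:ℝ)/2) *
      Real.exp (-d * ∑ j ∈ Finset.Icc (1:ℤ) ((|n| - 1) / 2),
        min (min ((a (n.sign * (2 * j))) ^ 2) ((a (n.sign * (2 * j - 1))) ^ 2)) lam)) := by
  set β : ℝ := 1 - 2 * α with hβdef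
  have hβ : 0 < β := by simp only [hβdef]; linarith
  set c : ℝ := d * min (C ^ 2) lam / 8 with hcdef
  have hminpos : 0 < min (C ^ 2) lam := lt_min (by positivity) hlam
  have hc : 0 < c := by positivity
  set f : ℤ → ℝ := fun n : ℤ => (a n) ^ (-(1:ℝ)/2) *
      Real.exp (-d * ∑ j ∈ Finset.Icc (1:ℤ) ((|n| - 1) / 2),
        min (min ((a (n.sign * (2 * j))) ^ 2) ((a (n.sign * (2 * j - 1))) ^ 2)) lam) with hfdef
  have hfpos : ∀ n, 0 < f n := fun n => by
    have := hpos n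
    positivity
  -- key pointwise bound
  have key : ∀ n : ℤ, 3 ≤ |n| →
      f n ≤ C ^ (-(1:ℝ)/2) * ((1 + |(n : ℝ)|) ^ (α/2) *
        Real.exp (-(c * (1 + |(n : ℝ)|) ^ β))) := by
    intro n hn
    set N : ℝ := |(n : ℝ)| with hNdef
    have hN3 : (3 : ℝ) ≤ N := by
      rw [hNdef, ← Int.cast_abs]; exact_mod_cast hn
    have hN1 : (1:ℝ) ≤ 1 + N := by linarith
    have hNpos : (0:ℝ) < 1 + N := by linarith
    -- part a
    have hbase : 0 < C * (1 + N) ^ (-α) := by positivity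
    have parta : (a n) ^ (-(1:ℝ)/2) ≤ C ^ (-(1:ℝ)/2) * (1 + N) ^ (α/2) := by
      have h1 : (a n) ^ (-(1:ℝ)/2) ≤ (C * (1 + N) ^ (-α)) ^ (-(1:ℝ)/2) :=
        Real.rpow_le_rpow_of_nonpos hbase (hlow n) (by norm_num)
      have h2 : (C * (1 + N) ^ (-α)) ^ (-(1:ℝ)/2)
          = C ^ (-(1:ℝ)/2) * (1 + N) ^ (α/2) := by
        rw [Real.mul_rpow hC.le (by positivity), ← Real.rpow_mul hNpos.le]
        congr 1
        ring
      rw [h2] at h1; exact h1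
    -- part b : lower bound on the sum
    set m : ℤ := (|n| - 1) / 2 with hmdef
    set L0 : ℝ := min ((C * (1 + N) ^ (-α)) ^ 2) lam with hL0def
    have hL0pos : 0 < L0 := lt_min (by positivity) hlam
    have hterm : ∀ j ∈ Finset.Icc (1:ℤ) m,
        L0 ≤ min (min ((a (n.sign * (2 * j))) ^ 2) ((a (n.sign * (2 * j - 1))) ^ 2)) lam := by
      intro j hj
      rw [Finset.mem_Icc] at hj
      have hjm : 2 * j ≤ |n| - 1 := by
        have := hj.2; rw [hmdef] at this; omega
      have hn0 : n ≠ 0 := by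
        intro h; rw [h] at hn; simp at hn
      have hs : n.sign = 1 ∨ n.sign = -1 := by
        rcases lt_trichotomy n 0 with h | h | h
        · right; exact Int.sign_eq_neg_one_of_neg h
        · exact absurd h hn0
        · left; exact Int.sign_eq_one_of_pos h
      have habs : ∀ k : ℤ, |k| ≤ |n| → C * (1 + N) ^ (-α) ≤ a k := by
        intro k hk
        refine le_trans ?_ (hlow k)
        have hkN : 1 + |(k : ℝ)| ≤ 1 + N := by
          rw [hNdef, ← Int.cast_abs, ← Int.cast_abs]
          have : ((|k| : ℤ) : ℝ) ≤ ((|n| : ℤ) : ℝ) := by exact_mod_cast hk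
          linarith
        have := Real.rpow_le_rpow_of_nonpos (by positivity : (0:ℝ) < 1 + |(k:ℝ)|) hkN
          (by linarith : -α ≤ 0)
        nlinarith [Real.rpow_nonneg (by positivity : (0:ℝ) ≤ 1 + N) (-α)]
      have hsq : ∀ k : ℤ, |k| ≤ |n| → (C * (1 + N) ^ (-α)) ^ 2 ≤ (a k) ^ 2 := by
        intro k hk
        exact pow_le_pow_left₀ hbase.le (habs k hk) 2
      have habs1 : |n.sign * (2 * j)| ≤ |n| := by
        rcases hs with h | h <;> rw [h]
        · rw [one_mul, abs_of_nonneg (by omega : (0:ℤ) ≤ 2 * j)]; omega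
        · rw [neg_one_mul, abs_neg, abs_of_nonneg (by omega : (0:ℤ) ≤ 2 * j)]; omega
      have habs2 : |n.sign * (2 * j - 1)| ≤ |n| := by
        rcases hs with h | h <;> rw [h]
        · rw [one_mul, abs_of_nonneg (by omega : (0:ℤ) ≤ 2 * j - 1)]; omega
        · rw [neg_one_mul, abs_neg, abs_of_nonneg (by omega : (0:ℤ) ≤ 2 * j - 1)]; omega
      exact le_min (le_min ((min_le_left _ _).trans (hsq _ habs1))
        ((min_le_left _ _).trans (hsq _ habs2))) (min_le_right _ _)
    have hcard : (Finset.Icc (1:ℤ) m).card = m.toNat := by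
      rw [Int.card_Icc]; congr 1; omega
    have hsumlb : (m.toNat : ℝ) * L0 ≤
        ∑ j ∈ Finset.Icc (1:ℤ) m,
          min (min ((a (n.sign * (2 * j))) ^ 2) ((a (n.sign * (2 * j - 1))) ^ 2)) lam := by
      have := Finset.card_nsmul_le_sum (Finset.Icc (1:ℤ) m) _ L0 hterm
      rwa [hcard, nsmul_eq_mul] at this
    -- m.toNat ≥ (1+N)/8
    have hm8 : (1 + N) / 8 ≤ (m.toNat : ℝ) := by
      have h1 : |n| + 1 ≤ 8 * m := by omega
      have h2 : (m : ℝ) ≤ (m.toNat : ℝ) := by exact_mod_cast Int.self_le_toNat m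
      have h3 : ((|n| : ℤ) : ℝ) + 1 ≤ 8 * (m : ℝ) := by exact_mod_cast h1
      rw [Int.cast_abs, ← hNdef] at h3
      linarith
    -- L0 ≥ min(C²,lam) * (1+N)^(-(2α))
    have hL0lb : min (C ^ 2) lam * (1 + N) ^ (-(2 * α)) ≤ L0 := by
      have hsq : ((1 + N) ^ (-α)) ^ 2 = (1 + N) ^ (-(2 * α)) := by
        rw [← Real.rpow_natCast ((1 + N) ^ (-α)) 2, ← Real.rpow_mul hNpos.le]
        norm_num; ring_nf
      have hle1 : (1 + N) ^ (-(2 * α)) ≤ 1 :=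
        Real.rpow_le_one_of_one_le_of_nonpos hN1 (by linarith)
      refine le_min ?_ ?_
      · calc min (C ^ 2) lam * (1 + N) ^ (-(2 * α))
            ≤ C ^ 2 * (1 + N) ^ (-(2 * α)) := by
              apply mul_le_mul_of_nonneg_right (min_le_left _ _) (by positivity)
          _ = (C * (1 + N) ^ (-α)) ^ 2 := by rw [mul_pow, hsq]
      · calc min (C ^ 2) lam * (1 + N) ^ (-(2 * α))
            ≤ min (C ^ 2) lam * 1 := by
              apply mul_le_mul_of_nonneg_left hle1 hminpos.le
          _ ≤ lam := by rw [mul_one]; exact min_le_right _ _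
    have hrpow_split : (1 + N) ^ β = (1 + N) * (1 + N) ^ (-(2 * α)) := by
      rw [hβdef]
      have : (1 : ℝ) - 2 * α = 1 + (-(2 * α)) := by ring
      rw [this, Real.rpow_add hNpos, Real.rpow_one]
    have partb : c * (1 + N) ^ β ≤ d * ∑ j ∈ Finset.Icc (1:ℤ) m,
        min (min ((a (n.sign * (2 * j))) ^ 2) ((a (n.sign * (2 * j - 1))) ^ 2)) lam := by
      have h5 : (1 + N) / 8 * (min (C ^ 2) lam * (1 + N) ^ (-(2 * α))) ≤
          (m.toNat : ℝ) * L0 := by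
        apply mul_le_mul hm8 hL0lb (by positivity) (by positivity)
      have h6 : c * (1 + N) ^ β = d * ((1 + N) / 8 * (min (C ^ 2) lam * (1 + N) ^ (-(2 * α)))) := by
        rw [hcdef, hrpow_split]; ring
      rw [h6]
      exact mul_le_mul_of_nonneg_left (h5.trans hsumlb) hd.le
    -- combine
    have hexp : Real.exp (-d * ∑ j ∈ Finset.Icc (1:ℤ) m,
        min (min ((a (n.sign * (2 * j))) ^ 2) ((a (n.sign * (2 * j - 1))) ^ 2)) lam)
        ≤ Real.exp (-(c * (1 + N) ^ β)) := by
      apply Real.exp_le_exp.mpr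
      rw [neg_mul]
      exact neg_le_neg partb
    calc f n ≤ (C ^ (-(1:ℝ)/2) * (1 + N) ^ (α/2)) * Real.exp (-(c * (1 + N) ^ β)) := by
          apply mul_le_mul parta hexp (Real.exp_pos _).le (by positivity)
      _ = C ^ (-(1:ℝ)/2) * ((1 + N) ^ (α/2) * Real.exp (-(c * (1 + N) ^ β))) := by ring
  -- assemble summability
  have hG : Summable (fun k : ℕ => C ^ (-(1:ℝ)/2) *
      ((1 + (k : ℝ)) ^ (α/2) * Real.exp (-(c * (1 + (k : ℝ)) ^ β)))) :=
    (my_summable_aux (α/2) c β hc hβ).mul_left _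
  have hGnn : ∀ k : ℕ, 0 ≤ C ^ (-(1:ℝ)/2) *
      ((1 + (k : ℝ)) ^ (α/2) * Real.exp (-(c * (1 + (k : ℝ)) ^ β))) := fun k => by positivity
  have hside : ∀ g : ℕ → ℤ, (∀ k : ℕ, |g k| = (k : ℤ)) → Summable (fun k : ℕ => f (g k)) := by
    intro g hg
    refine summable_of_isBigO_nat hG ?_
    rw [Asymptotics.isBigO_iff]
    refine ⟨1, ?_⟩
    filter_upwards [Filter.eventually_ge_atTop 3] with k hk
    have habsk : |((g k : ℤ) : ℝ)| = (k : ℝ) := by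
      rw [← Int.cast_abs, hg k]; norm_num
    have h3 : 3 ≤ |g k| := by rw [hg k]; exact_mod_cast hk
    have := key (g k) h3
    rw [habsk] at this
    rw [Real.norm_of_nonneg (hfpos _).le, Real.norm_of_nonneg (hGnn k), one_mul]
    exact this
  have h1 : Summable (fun k : ℕ => f (k : ℤ)) :=
    hside (fun k => (k : ℤ)) (fun k => by simp)
  have h2 : Summable (fun k : ℕ => f (-(k : ℤ))) :=
    hside (fun k => -(k : ℤ)) (fun k => by simp)
  exact Summable.of_nat_of_neg h1 h2
end

section
/- Let (Υ, μ) be a probability space and ζ ↦ V_ζ a measurable family of uniformly bounded potentials ℤ → ℝ, with H_ζ the discrete Schrödinger operator on ℓ²(ℤ) with potential V_ζ. For L ∈ ℤ₊ let H_ζ^{(L)} denote the restriction of H_ζ to ℓ²({−L,…,L}) with Dirichlet boundary conditions, regarded as an operator on ℓ²(ℤ) vanishing outside {−L,…,L}. Set a(n,m) = E_μ( sup_{t∈ℝ} |⟨δ_n, e^{−itH_ζ} δ_m⟩| ) and a_L(n,m) = E_μ( sup_{t∈ℝ} |⟨δ_n, e^{−itH_ζ^{(L)}} δ_m⟩| ).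 Then for all n, m ∈ ℤ, a(n,m) ≤ liminf_{L→∞} a_L(n,m). -/
open MeasureTheory

noncomputable section

/-- `ℓ²(ℤ)` with complex coefficients. -/
abbrev l2Z := lp (fun _ : ℤ => ℂ) 2

/-- The standard orthonormal basis vector `δ_n` of `ℓ²(ℤ)`. -/
def delta (n : ℤ) : l2Z := lp.single 2 n 1

/-- The unitary group `e^{-itH}` generated by a bounded operator `H`. -/
def timeEvolution (H : l2Z →L[ℂ] l2Z) (t : ℝ) : l2Z →L[ℂ] l2Z :=
  NormedSpace.exp ((-(Complex.I * t)) • H)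

/-! ### Auxiliary lemmas -/

lemma delta_apply (n k : ℤ) : (delta n : ∀ _ : ℤ, ℂ) k = if k = n then 1 else 0 := by
  rcases eq_or_ne k n with h | h
  · subst h; simp [delta, lp.single_apply_self]
  · simp [delta, lp.single_apply_ne _ _ _ h, h]

lemma inner_delta_left (n : ℤ) (f : l2Z) : (inner ℂ (delta n) f : ℂ) = (f : ∀ _ : ℤ, ℂ) n := by
  rw [delta, lp.inner_single_left]
  simp

lemma norm_delta (n : ℤ) : ‖delta n‖ = 1 := by
  have : ‖lp.single (E := fun _ : ℤ => ℂ) 2 n ((fun _ : ℤ => (1:ℂ)) n)‖ = ‖(1:ℂ)‖ :=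
    lp.norm_single (E := fun _ : ℤ => ℂ) (p := 2) (by norm_num) n ((fun _ : ℤ => (1:ℂ)) n)
  simpa [delta] using this

lemma dense_span_delta :
    Dense ((Submodule.span ℂ (Set.range delta) : Submodule ℂ l2Z) : Set l2Z) := by
  intro f
  have h := lp.hasSum_single (E := fun _ : ℤ => ℂ) ENNReal.ofNat_ne_top f
  refine mem_closure_of_tendsto h (Filter.Eventually.of_forall fun s => ?_)
  refine Submodule.sum_mem _ fun i _ => ?_
  have : lp.single (E := fun _ : ℤ => ℂ) 2 i ((f : ∀ _ : ℤ, ℂ) i)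
      = (f : ∀ _ : ℤ, ℂ) i • delta i := by
    have := lp.single_smul (E := fun _ : ℤ => ℂ) 2 i ((f : ∀ _ : ℤ, ℂ) i) (1 : ℂ)
    simpa [delta, smul_eq_mul] using this
  rw [this]
  exact Submodule.smul_mem _ _ (Submodule.subset_span ⟨i, rfl⟩)

lemma isSelfAdjoint_of_matrix (A : l2Z →L[ℂ] l2Z)
    (h : ∀ i j : ℤ, (starRingEnd ℂ) ((A (delta i) : ∀ _ : ℤ, ℂ) j)
      = (A (delta j) : ∀ _ : ℤ, ℂ) i) :
    IsSelfAdjoint A := by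
  rw [ContinuousLinearMap.isSelfAdjoint_iff_isSymmetric]
  have base : ∀ i : ℤ, ∀ y : l2Z, (inner ℂ (A (delta i)) y : ℂ) = inner ℂ (delta i) (A y) := by
    intro i
    have hc1 : Continuous fun y : l2Z => (inner ℂ (A (delta i)) y : ℂ) :=
      continuous_const.inner continuous_id
    have hc2 : Continuous fun y : l2Z => (inner ℂ (delta i) (A y) : ℂ) :=
      continuous_const.inner A.continuous
    have heq : Set.EqOn (fun y : l2Z => (inner ℂ (A (delta i)) y : ℂ))
        (fun y : l2Z => (inner ℂ (delta i) (A y) : ℂ))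
        ((Submodule.span ℂ (Set.range delta) : Submodule ℂ l2Z) : Set l2Z) := by
      intro y hy
      induction hy using Submodule.span_induction with
      | mem x hx =>
        obtain ⟨j, rfl⟩ := hx
        show (inner ℂ (A (delta i)) (delta j) : ℂ) = inner ℂ (delta i) (A (delta j))
        rw [← inner_conj_symm, inner_delta_left, inner_delta_left, h]
      | zero => simp
      | add x y _ _ hx hy => simp only [inner_add_right, map_add, hx, hy]
      | smul c x _ hx => simp only [inner_smul_right, _root_.map_smul, hx]
    exact congrFun (hc1.ext_on dense_span_delta hc2 heq)
  intro x y
  have hc1 : Continuous fun x : l2Z => (inner ℂ (A x) y : ℂ) :=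
    (A.continuous.inner continuous_const)
  have hc2 : Continuous fun x : l2Z => (inner ℂ x (A y) : ℂ) :=
    continuous_id.inner continuous_const
  have heq : Set.EqOn (fun x : l2Z => (inner ℂ (A x) y : ℂ))
      (fun x : l2Z => (inner ℂ x (A y) : ℂ))
      ((Submodule.span ℂ (Set.range delta) : Submodule ℂ l2Z) : Set l2Z) := by
    intro x hx
    induction hx using Submodule.span_induction with
    | mem x hx => obtain ⟨i, rfl⟩ := hx; exact base i y
    | zero => simp
    | add a b _ _ ha hb => simp only [map_add, inner_add_left, ha, hb]
    | smul c a _ ha => simp only [_root_.map_smul, inner_smul_left, ha]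
  exact congrFun (hc1.ext_on dense_span_delta hc2 heq) x

lemma timeEvolution_norm_apply (A : l2Z →L[ℂ] l2Z) (hA : IsSelfAdjoint A) (t : ℝ) (x : l2Z) :
    ‖timeEvolution A t x‖ = ‖x‖ := by
  have hstar : star (timeEvolution A t) * timeEvolution A t = 1 := by
    rw [timeEvolution, NormedSpace.star_exp]
    rw [star_smul, hA.star_eq]
    have hc : star (-(Complex.I * (t:ℂ))) = Complex.I * t := by
      simp [star_mul', Complex.star_def, Complex.conj_ofReal]
    rw [hc, ← NormedSpace.exp_add_of_commute_of_mem_ball (𝕂 := ℂ) (((Commute.refl A).smul_left _).smul_right _)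
      ((NormedSpace.expSeries_radius_eq_top ℂ (l2Z →L[ℂ] l2Z)).symm ▸ edist_lt_top _ _)
      ((NormedSpace.expSeries_radius_eq_top ℂ (l2Z →L[ℂ] l2Z)).symm ▸ edist_lt_top _ _)]
    simp [NormedSpace.exp_zero]
  have hinner : (inner ℂ (timeEvolution A t x) (timeEvolution A t x) : ℂ) = inner ℂ x x := by
    rw [← ContinuousLinearMap.adjoint_inner_right, ← ContinuousLinearMap.star_eq_adjoint,
      ← ContinuousLinearMap.mul_apply, hstar, ContinuousLinearMap.one_apply]
  have h2 : ‖timeEvolution A t x‖ ^ 2 = ‖x‖ ^ 2 := by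
    rw [← @inner_self_eq_norm_sq ℂ, ← @inner_self_eq_norm_sq ℂ, hinner]
  exact sq_eq_sq₀ (norm_nonneg _) (norm_nonneg _) |>.mp h2

lemma inner_timeEvolution_le_one (A : l2Z →L[ℂ] l2Z) (hA : IsSelfAdjoint A) (t : ℝ) (n m : ℤ) :
    ‖(inner ℂ (delta n) (timeEvolution A t (delta m)) : ℂ)‖ ≤ 1 := by
  calc ‖(inner ℂ (delta n) (timeEvolution A t (delta m)) : ℂ)‖
      ≤ ‖delta n‖ * ‖timeEvolution A t (delta m)‖ := norm_inner_le_norm _ _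
    _ = 1 := by rw [norm_delta, timeEvolution_norm_apply A hA, norm_delta, one_mul]

/-- Matrix elements of `exp (c • A)` as a power series. -/
lemma inner_exp_smul_eq_tsum (A : l2Z →L[ℂ] l2Z) (c : ℂ) (n m : ℤ) :
    (inner ℂ (delta n) ((NormedSpace.exp (c • A)) (delta m)) : ℂ)
      = ∑' k : ℕ, ((k.factorial : ℂ)⁻¹ * c ^ k) * ((A ^ k) (delta m) : ∀ _ : ℤ, ℂ) n := by
  set Φ : (l2Z →L[ℂ] l2Z) →L[ℂ] ℂ :=
    (innerSL ℂ (delta n)).comp (ContinuousLinearMap.apply ℂ l2Z (delta m)) with hΦ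
  have hΦap : ∀ T : l2Z →L[ℂ] l2Z, Φ T = (inner ℂ (delta n) (T (delta m)) : ℂ) := fun T => rfl
  have hsum : Summable fun k : ℕ => ((k.factorial : ℂ)⁻¹) • (c • A) ^ k :=
    NormedSpace.expSeries_summable' (𝕂 := ℂ) (c • A)
  calc (inner ℂ (delta n) ((NormedSpace.exp (c • A)) (delta m)) : ℂ)
      = Φ (NormedSpace.exp (c • A)) := rfl
    _ = Φ (∑' k : ℕ, ((k.factorial : ℂ)⁻¹) • (c • A) ^ k) := by
        rw [NormedSpace.exp_eq_tsum (𝕂 := ℂ)]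
    _ = ∑' k : ℕ, Φ (((k.factorial : ℂ)⁻¹) • (c • A) ^ k) := Φ.map_tsum hsum
    _ = ∑' k : ℕ, ((k.factorial : ℂ)⁻¹ * c ^ k) * ((A ^ k) (delta m) : ∀ _ : ℤ, ℂ) n := by
        refine tsum_congr fun k => ?_
        rw [_root_.map_smul, hΦap, smul_pow, ContinuousLinearMap.smul_apply, inner_smul_right,
          inner_delta_left]
        rw [smul_eq_mul]; ring

/-- Uniform coordinate bound for powers applied to delta. -/
lemma pow_delta_coord_bound {A : l2Z →L[ℂ] l2Z} {M : ℝ}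
    (hco : ∀ (ψ : l2Z) (C : ℝ), 0 ≤ C → (∀ j : ℤ, ‖(ψ : ∀ _ : ℤ, ℂ) j‖ ≤ C) →
      ∀ j : ℤ, ‖(A ψ : ∀ _ : ℤ, ℂ) j‖ ≤ (2 + M) * C)
    (hM : 0 ≤ M) (m : ℤ) :
    ∀ (k : ℕ) (j : ℤ), ‖((A ^ k) (delta m) : ∀ _ : ℤ, ℂ) j‖ ≤ (2 + M) ^ k := by
  intro k
  induction k with
  | zero =>
    intro j
    simp only [pow_zero, ContinuousLinearMap.one_apply, delta_apply]
    split_ifs <;> simp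
  | succ k ih =>
    intro j
    have h1 : (A ^ (k + 1)) (delta m) = A ((A ^ k) (delta m)) := by
      rw [pow_succ'] ; rfl
    rw [h1]
    have h2 := hco ((A ^ k) (delta m)) ((2 + M) ^ k) (by positivity) ih j
    calc ‖(A ((A ^ k) (delta m)) : ∀ _ : ℤ, ℂ) j‖ ≤ (2 + M) * (2 + M) ^ k := h2
      _ = (2 + M) ^ (k + 1) := by ring

section prop
variable (A B : l2Z →L[ℂ] l2Z) (W : ℤ → ℝ) (L : ℕ)
variable (hA : ∀ (ψ : l2Z) (n : ℤ), (A ψ : ∀ _ : ℤ, ℂ) n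
      = (ψ : ∀ _ : ℤ, ℂ) (n + 1) + (ψ : ∀ _ : ℤ, ℂ) (n - 1) + (W n : ℂ) * (ψ : ∀ _ : ℤ, ℂ) n)
variable (hB : ∀ (ψ : l2Z) (n : ℤ), (B ψ : ∀ _ : ℤ, ℂ) n
      = if |n| ≤ (L : ℤ) then
          (if |n + 1| ≤ (L : ℤ) then (ψ : ∀ _ : ℤ, ℂ) (n + 1) else 0) +
          (if |n - 1| ≤ (L : ℤ) then (ψ : ∀ _ : ℤ, ℂ) (n - 1) else 0) +
          (W n : ℂ) * (ψ : ∀ _ : ℤ, ℂ) n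
        else 0)

include hA hB in
lemma cutoff_eq (ψ : l2Z) (hψ : ∀ x : ℤ, (L : ℤ) ≤ |x| → (ψ : ∀ _ : ℤ, ℂ) x = 0) :
    B ψ = A ψ := by
  apply lp.ext
  funext x
  rw [hA, hB]
  by_cases hx : |x| ≤ (L : ℤ)
  · rw [if_pos hx]
    congr 1
    congr 1
    · by_cases h1 : |x + 1| ≤ (L : ℤ)
      · rw [if_pos h1]
      · rw [if_neg h1, hψ _ (by simp only [Int.abs_eq_natAbs] at *; omega)]
    · by_cases h1 : |x - 1| ≤ (L : ℤ)
      · rw [if_pos h1]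
      · rw [if_neg h1, hψ _ (by simp only [Int.abs_eq_natAbs] at *; omega)]
  · rw [if_neg hx, hψ x (by simp only [Int.abs_eq_natAbs] at *; omega),
      hψ (x+1) (by simp only [Int.abs_eq_natAbs] at *; omega),
      hψ (x-1) (by simp only [Int.abs_eq_natAbs] at *; omega)]
    simp

include hA in
lemma support_grow (ψ : l2Z) (c : ℤ) (hψ : ∀ x : ℤ, c < |x| → (ψ : ∀ _ : ℤ, ℂ) x = 0) :
    ∀ x : ℤ, c + 1 < |x| → (A ψ : ∀ _ : ℤ, ℂ) x = 0 := by
  intro x hx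
  rw [hA, hψ x (by simp only [Int.abs_eq_natAbs] at *; omega),
    hψ (x+1) (by simp only [Int.abs_eq_natAbs] at *; omega),
    hψ (x-1) (by simp only [Int.abs_eq_natAbs] at *; omega)]
  simp

include hA in
lemma pow_support (m : ℤ) :
    ∀ (k : ℕ) (x : ℤ), |m| + k < |x| → ((A ^ k) (delta m) : ∀ _ : ℤ, ℂ) x = 0 := by
  intro k
  induction k with
  | zero =>
    intro x hx
    simp only [pow_zero, ContinuousLinearMap.one_apply, delta_apply]
    rw [if_neg (by simp only [Int.abs_eq_natAbs] at *; omega)]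
  | succ k ih =>
    intro x hx
    have h1 : (A ^ (k + 1)) (delta m) = A ((A ^ k) (delta m)) := by rw [pow_succ']; rfl
    rw [h1]
    exact support_grow A W hA _ (|m| + k) ih x
      (by simp only [Int.abs_eq_natAbs] at *; push_cast at *; omega)

include hA hB in
lemma pow_eq (m : ℤ) :
    ∀ k : ℕ, |m| + k + 1 ≤ (L : ℤ) → (B ^ k) (delta m) = (A ^ k) (delta m) := by
  intro k
  induction k with
  | zero => intro _; simp
  | succ k ih =>
    intro hk
    push_cast at hk
    have hik : (B ^ k) (delta m) = (A ^ k) (delta m) := ih (by push_cast; omega)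
    have h1 : (B ^ (k + 1)) (delta m) = B ((B ^ k) (delta m)) := by rw [pow_succ']; rfl
    have h2 : (A ^ (k + 1)) (delta m) = A ((A ^ k) (delta m)) := by rw [pow_succ']; rfl
    rw [h1, h2, hik]
    refine cutoff_eq A B W L hA hB _ fun x hx => ?_
    refine pow_support A W hA m k x ?_
    simp only [Int.abs_eq_natAbs] at *; push_cast at *; omega
end prop

set_option maxHeartbeats 4000000 in
/-- Finite-volume approximation of dynamical quantities: with
`a(n,m) = E_μ(sup_t |⟨δ_n, e^{-itH_ζ} δ_m⟩|)` and `a_L(n,m)` defined analogously for the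
Dirichlet restrictions `H_ζ^{(L)}` (regarded as operators on `ℓ²(ℤ)` vanishing outside
`{-L,…,L}`), one has `a(n,m) ≤ liminf_{L→∞} a_L(n,m)` for all `n, m ∈ ℤ`. -/
theorem a_le_liminf_aL
    (Υ : Type*) [MeasurableSpace Υ] (μ : Measure Υ) [IsProbabilityMeasure μ]
    (V : Υ → ℤ → ℝ) (hVmeas : ∀ n : ℤ, Measurable fun ζ => V ζ n)
    (hVbdd : ∃ M : ℝ, ∀ ζ n, |V ζ n| ≤ M)
    (H : Υ → (l2Z →L[ℂ] l2Z))
    (hH : ∀ ζ (ψ : l2Z) (n : ℤ), (H ζ ψ : ∀ _ : ℤ, ℂ) n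
      = (ψ : ∀ _ : ℤ, ℂ) (n + 1) + (ψ : ∀ _ : ℤ, ℂ) (n - 1) + (V ζ n : ℂ) * (ψ : ∀ _ : ℤ, ℂ) n)
    (H' : Υ → ℕ → (l2Z →L[ℂ] l2Z))
    (hH' : ∀ ζ (L : ℕ) (ψ : l2Z) (n : ℤ), (H' ζ L ψ : ∀ _ : ℤ, ℂ) n
      = if |n| ≤ (L : ℤ) then
          (if |n + 1| ≤ (L : ℤ) then (ψ : ∀ _ : ℤ, ℂ) (n + 1) else 0) +
          (if |n - 1| ≤ (L : ℤ) then (ψ : ∀ _ : ℤ, ℂ) (n - 1) else 0) +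
          (V ζ n : ℂ) * (ψ : ∀ _ : ℤ, ℂ) n
        else 0)
    (hmeas : ∀ n m : ℤ, AEStronglyMeasurable
      (fun ζ => ⨆ t : ℝ, ‖(inner ℂ (delta n) (timeEvolution (H ζ) t (delta m)) : ℂ)‖) μ)
    (hmeas' : ∀ (L : ℕ) (n m : ℤ), AEStronglyMeasurable
      (fun ζ => ⨆ t : ℝ, ‖(inner ℂ (delta n) (timeEvolution (H' ζ L) t (delta m)) : ℂ)‖) μ) :
    ∀ n m : ℤ,
      (∫ ζ, (⨆ t : ℝ, ‖(inner ℂ (delta n) (timeEvolution (H ζ) t (delta m)) : ℂ)‖) ∂μ)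
        ≤ Filter.liminf (fun L : ℕ =>
            ∫ ζ, (⨆ t : ℝ, ‖(inner ℂ (delta n) (timeEvolution (H' ζ L) t (delta m)) : ℂ)‖) ∂μ)
          Filter.atTop := by
  intro n m
  classical
  obtain ⟨M₀, hM₀⟩ := hVbdd
  set M : ℝ := |M₀| with hMdef
  have hM : ∀ ζ k, |V ζ k| ≤ M := fun ζ k => (hM₀ ζ k).trans (le_abs_self M₀)
  have hM0 : 0 ≤ M := abs_nonneg M₀
  have hsa : ∀ ζ, IsSelfAdjoint (H ζ) := by
    intro ζ
    refine isSelfAdjoint_of_matrix _ fun i j => ?_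
    rw [hH, hH]
    simp only [delta_apply, map_add, map_mul, Complex.conj_ofReal, apply_ite (starRingEnd ℂ),
      map_one, map_zero]
    split_ifs
    all_goals try (exfalso; (try simp only [Int.abs_eq_natAbs] at *); omega)
    all_goals try ring
    all_goals (subst_vars; ring)
  have hsa' : ∀ ζ L, IsSelfAdjoint (H' ζ L) := by
    intro ζ L
    refine isSelfAdjoint_of_matrix _ fun i j => ?_
    rw [hH', hH']
    simp only [delta_apply, map_add, map_mul, Complex.conj_ofReal, apply_ite (starRingEnd ℂ),
      map_one, map_zero]
    split_ifs
    all_goals try (exfalso; (try simp only [Int.abs_eq_natAbs] at *); omega)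
    all_goals try ring
    all_goals (subst_vars; ring)
  set g : Υ → ℝ → ℝ :=
    fun ζ t => ‖(inner ℂ (delta n) (timeEvolution (H ζ) t (delta m)) : ℂ)‖ with hgdef
  set gL : Υ → ℕ → ℝ → ℝ :=
    fun ζ L t => ‖(inner ℂ (delta n) (timeEvolution (H' ζ L) t (delta m)) : ℂ)‖ with hgLdef
  have hg1 : ∀ ζ t, g ζ t ≤ 1 := fun ζ t => inner_timeEvolution_le_one _ (hsa ζ) t n m
  have hgL1 : ∀ ζ L t, gL ζ L t ≤ 1 := fun ζ L t => inner_timeEvolution_le_one _ (hsa' ζ L) t n m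
  set f : Υ → ℝ := fun ζ => ⨆ t : ℝ, g ζ t with hfdef
  set fL : ℕ → Υ → ℝ := fun L ζ => ⨆ t : ℝ, gL ζ L t with hfLdef
  have hf0 : ∀ ζ, 0 ≤ f ζ := fun ζ => Real.iSup_nonneg fun t => norm_nonneg _
  have hfL0 : ∀ L ζ, 0 ≤ fL L ζ := fun L ζ => Real.iSup_nonneg fun t => norm_nonneg _
  have hf1 : ∀ ζ, f ζ ≤ 1 := fun ζ => Real.iSup_le (fun t => hg1 ζ t) one_pos.le
  have hfL1 : ∀ L ζ, fL L ζ ≤ 1 := fun L ζ => Real.iSup_le (fun t => hgL1 ζ L t) one_pos.le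
  have hbddL : ∀ ζ L, BddAbove (Set.range fun t => gL ζ L t) :=
    fun ζ L => ⟨1, by rintro x ⟨t, rfl⟩; exact hgL1 ζ L t⟩
  have hcoH : ∀ ζ (ψ : l2Z) (C : ℝ), 0 ≤ C → (∀ j : ℤ, ‖(ψ : ∀ _ : ℤ, ℂ) j‖ ≤ C) →
      ∀ j : ℤ, ‖(H ζ ψ : ∀ _ : ℤ, ℂ) j‖ ≤ (2 + M) * C := by
    intro ζ ψ C hC hψ j
    rw [hH]
    have hc : ‖(V ζ j : ℂ) * (ψ : ∀ _ : ℤ, ℂ) j‖ ≤ M * C := by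
      rw [norm_mul, Complex.norm_real]
      exact mul_le_mul (hM ζ j) (hψ j) (norm_nonneg _) hM0
    have h3 := norm_add₃_le (a := (ψ : ∀ _ : ℤ, ℂ) (j+1)) (b := (ψ : ∀ _ : ℤ, ℂ) (j-1))
      (c := (V ζ j : ℂ) * (ψ : ∀ _ : ℤ, ℂ) j)
    have hr : (2 + M) * C = C + C + M * C := by ring
    rw [hr]
    have := hψ (j+1); have := hψ (j-1)
    linarith
  have hcoH' : ∀ ζ L (ψ : l2Z) (C : ℝ), 0 ≤ C → (∀ j : ℤ, ‖(ψ : ∀ _ : ℤ, ℂ) j‖ ≤ C) →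
      ∀ j : ℤ, ‖(H' ζ L ψ : ∀ _ : ℤ, ℂ) j‖ ≤ (2 + M) * C := by
    intro ζ L ψ C hC hψ j
    rw [hH']
    by_cases h : |j| ≤ (L : ℤ)
    · rw [if_pos h]
      have hb1 : ‖if |j + 1| ≤ (L:ℤ) then (ψ : ∀ _ : ℤ, ℂ) (j+1) else 0‖ ≤ C := by
        split_ifs
        · exact hψ _
        · simpa using hC
      have hb2 : ‖if |j - 1| ≤ (L:ℤ) then (ψ : ∀ _ : ℤ, ℂ) (j-1) else 0‖ ≤ C := by
        split_ifs
        · exact hψ _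
        · simpa using hC
      have hc : ‖(V ζ j : ℂ) * (ψ : ∀ _ : ℤ, ℂ) j‖ ≤ M * C := by
        rw [norm_mul, Complex.norm_real]
        exact mul_le_mul (hM ζ j) (hψ j) (norm_nonneg _) hM0
      have h3 := norm_add₃_le (a := if |j + 1| ≤ (L:ℤ) then (ψ : ∀ _ : ℤ, ℂ) (j+1) else 0)
        (b := if |j - 1| ≤ (L:ℤ) then (ψ : ∀ _ : ℤ, ℂ) (j-1) else 0)
        (c := (V ζ j : ℂ) * (ψ : ∀ _ : ℤ, ℂ) j)
      have hr : (2 + M) * C = C + C + M * C := by ring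
      rw [hr]
      linarith
    · rw [if_neg h]
      simpa using by positivity
  -- convergence of matrix elements for each ζ and t
  have hconv : ∀ ζ (t : ℝ),
      Filter.Tendsto (fun L : ℕ => gL ζ L t) Filter.atTop (nhds (g ζ t)) := by
    intro ζ t
    have hnc : ‖(-(Complex.I * (t:ℂ)))‖ = |t| := by
      rw [norm_neg, norm_mul, Complex.norm_I, one_mul, Complex.norm_real, Real.norm_eq_abs]
    have hkey : Filter.Tendsto
        (fun L : ℕ => (inner ℂ (delta n) (timeEvolution (H' ζ L) t (delta m)) : ℂ))
        Filter.atTop (nhds (inner ℂ (delta n) (timeEvolution (H ζ) t (delta m)) : ℂ)) := by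
      have hrw : ∀ L : ℕ, (inner ℂ (delta n) (timeEvolution (H' ζ L) t (delta m)) : ℂ)
          = ∑' k : ℕ, ((k.factorial : ℂ)⁻¹ * (-(Complex.I * (t:ℂ))) ^ k)
              * (((H' ζ L) ^ k) (delta m) : ∀ _ : ℤ, ℂ) n :=
        fun L => inner_exp_smul_eq_tsum (H' ζ L) _ n m
      have hrw2 : (inner ℂ (delta n) (timeEvolution (H ζ) t (delta m)) : ℂ)
          = ∑' k : ℕ, ((k.factorial : ℂ)⁻¹ * (-(Complex.I * (t:ℂ))) ^ k)
              * (((H ζ) ^ k) (delta m) : ∀ _ : ℤ, ℂ) n :=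
        inner_exp_smul_eq_tsum (H ζ) _ n m
      rw [hrw2]
      simp only [hrw]
      refine tendsto_tsum_of_dominated_convergence
        (bound := fun k : ℕ => ((2 + M) * |t|) ^ k / (k.factorial : ℝ)) ?_ ?_ ?_
      · exact Real.summable_pow_div_factorial _
      · -- pointwise convergence in L for fixed k : eventually constant
        intro k
        have hev : ∀ᶠ L : ℕ in Filter.atTop,
            ((k.factorial : ℂ)⁻¹ * (-(Complex.I * (t:ℂ))) ^ k)
                * (((H' ζ L) ^ k) (delta m) : ∀ _ : ℤ, ℂ) n
              = ((k.factorial : ℂ)⁻¹ * (-(Complex.I * (t:ℂ))) ^ k)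
                * (((H ζ) ^ k) (delta m) : ∀ _ : ℤ, ℂ) n := by
          rw [Filter.eventually_atTop]
          refine ⟨(|m| + k + 1).toNat, fun L hL => ?_⟩
          have hLe : |m| + k + 1 ≤ (L : ℤ) := by
            have := Int.toNat_le.mp hL
            omega
          rw [pow_eq (H ζ) (H' ζ L) (V ζ) L (hH ζ) (hH' ζ L) m k hLe]
        exact Filter.Tendsto.congr' (hev.mono fun _ h => h.symm) tendsto_const_nhds
      · refine Filter.Eventually.of_forall fun L => fun k => ?_
        have hb := pow_delta_coord_bound (A := H' ζ L) (M := M) (hcoH' ζ L) hM0 m k n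
        have h1 : ‖((k.factorial : ℂ))‖ = (k.factorial : ℝ) := by
          simp [Complex.norm_natCast]
        have h2 : ‖((k.factorial : ℂ)⁻¹ * (-(Complex.I * (t:ℂ))) ^ k)
              * (((H' ζ L) ^ k) (delta m) : ∀ _ : ℤ, ℂ) n‖
            = (k.factorial : ℝ)⁻¹ * |t| ^ k * ‖(((H' ζ L) ^ k) (delta m) : ∀ _ : ℤ, ℂ) n‖ := by
          rw [norm_mul, norm_mul, norm_inv, norm_pow, hnc, h1]
        have h3 : (k.factorial : ℝ)⁻¹ * |t| ^ k * (2 + M) ^ k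
            = ((2 + M) * |t|) ^ k / (k.factorial : ℝ) := by
          rw [mul_pow, div_eq_mul_inv]; ring
        refine le_trans (le_of_eq h2) (le_trans ?_ (le_of_eq h3))
        apply mul_le_mul_of_nonneg_left hb
        positivity
    exact (hkey.norm : _)
  -- pointwise liminf inequality (real)
  have hpt : ∀ ζ, f ζ ≤ Filter.liminf (fun L : ℕ => fL L ζ) Filter.atTop := by
    intro ζ
    have hcb : Filter.IsCoboundedUnder (· ≥ ·) Filter.atTop (fun L : ℕ => fL L ζ) :=
      Filter.IsBoundedUnder.isCoboundedUnder_ge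
        (Filter.isBoundedUnder_of ⟨1, fun L => hfL1 L ζ⟩)
    refine Real.iSup_le (fun t => ?_) ?_
    · refine le_of_forall_sub_le fun ε hε => ?_
      have hev : ∀ᶠ L : ℕ in Filter.atTop, g ζ t - ε ≤ fL L ζ := by
        have h1 : ∀ᶠ L : ℕ in Filter.atTop, g ζ t - ε < gL ζ L t :=
          (hconv ζ t).eventually (eventually_gt_nhds (by linarith))
        refine h1.mono fun L hL => le_trans hL.le ?_
        exact le_ciSup (hbddL ζ L) t
      exact Filter.le_liminf_of_le hcb hev
    · refine Filter.le_liminf_of_le hcb ?_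
      exact Filter.Eventually.of_forall fun L => hfL0 L ζ
  -- transfer to ENNReal and integrate
  set F : Υ → ENNReal := fun ζ => ENNReal.ofReal (f ζ) with hFdef
  set FL : ℕ → Υ → ENNReal := fun L ζ => ENNReal.ofReal (fL L ζ) with hFLdef
  have hptE : ∀ ζ, F ζ ≤ Filter.liminf (fun L : ℕ => FL L ζ) Filter.atTop := by
    intro ζ
    rw [Filter.le_liminf_iff]
    intro b hb
    have hbne : b ≠ ⊤ := (hb.trans_le le_top).ne
    have hblt : b.toReal < f ζ := (ENNReal.lt_ofReal_iff_toReal_lt hbne).mp hb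
    have hblt2 : b.toReal < Filter.liminf (fun L : ℕ => fL L ζ) Filter.atTop :=
      hblt.trans_le (hpt ζ)
    have hbd : Filter.IsBoundedUnder (· ≥ ·) Filter.atTop (fun L : ℕ => fL L ζ) :=
      Filter.isBoundedUnder_of ⟨0, fun L => hfL0 L ζ⟩
    have hev := Filter.eventually_lt_of_lt_liminf hblt2 hbd
    refine hev.mono fun L hL => ?_
    have : b = ENNReal.ofReal b.toReal := (ENNReal.ofReal_toReal hbne).symm
    rw [this]
    exact (ENNReal.ofReal_lt_ofReal_iff (lt_of_le_of_lt ENNReal.toReal_nonneg hL)).mpr hL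
  have hFmeas : ∀ L, AEMeasurable (FL L) μ :=
    fun L => ((hmeas' L n m).aemeasurable).ennreal_ofReal
  have hFLle1 : ∀ L, (∫⁻ ζ, FL L ζ ∂μ) ≤ 1 := by
    intro L
    calc (∫⁻ ζ, FL L ζ ∂μ) ≤ ∫⁻ _, 1 ∂μ := by
          refine lintegral_mono fun ζ => ?_
          exact ENNReal.ofReal_le_one.mpr (hfL1 L ζ)
      _ = 1 := by simp
  have hIeq : (∫ ζ, f ζ ∂μ) = (∫⁻ ζ, F ζ ∂μ).toReal :=
    integral_eq_lintegral_of_nonneg_ae (Filter.Eventually.of_forall hf0) (hmeas n m)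
  have hIeqL : ∀ L, (∫ ζ, fL L ζ ∂μ) = (∫⁻ ζ, FL L ζ ∂μ).toReal :=
    fun L => integral_eq_lintegral_of_nonneg_ae
      (Filter.Eventually.of_forall (hfL0 L)) (hmeas' L n m)
  have hchain : (∫⁻ ζ, F ζ ∂μ) ≤ Filter.liminf (fun L : ℕ => ∫⁻ ζ, FL L ζ ∂μ) Filter.atTop := by
    calc (∫⁻ ζ, F ζ ∂μ) ≤ ∫⁻ ζ, Filter.liminf (fun L : ℕ => FL L ζ) Filter.atTop ∂μ :=
          lintegral_mono hptE
      _ ≤ Filter.liminf (fun L : ℕ => ∫⁻ ζ, FL L ζ ∂μ) Filter.atTop :=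
          lintegral_liminf_le' hFmeas
  set B : ENNReal := Filter.liminf (fun L : ℕ => ∫⁻ ζ, FL L ζ ∂μ) Filter.atTop with hBdef
  have hB1 : B ≤ 1 :=
    Filter.liminf_le_of_frequently_le (Filter.Frequently.of_forall fun L => hFLle1 L)
  have hBne : B ≠ ⊤ := ne_top_of_le_ne_top ENNReal.one_ne_top hB1
  have hgoal : (∫ ζ, f ζ ∂μ) ≤ Filter.liminf (fun L : ℕ => ∫ ζ, fL L ζ ∂μ) Filter.atTop := by
    rw [hIeq]
    have hfun : (fun L : ℕ => ∫ ζ, fL L ζ ∂μ) = fun L : ℕ => (∫⁻ ζ, FL L ζ ∂μ).toReal :=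
      funext hIeqL
    rw [hfun]
    have hto1 : ∀ L : ℕ, (∫⁻ ζ, FL L ζ ∂μ).toReal ≤ 1 := by
      intro L
      have := ENNReal.toReal_mono ENNReal.one_ne_top (hFLle1 L)
      simpa using this
    have hcb : Filter.IsCoboundedUnder (· ≥ ·) Filter.atTop
        (fun L : ℕ => (∫⁻ ζ, FL L ζ ∂μ).toReal) :=
      Filter.IsBoundedUnder.isCoboundedUnder_ge (Filter.isBoundedUnder_of ⟨1, hto1⟩)
    refine le_of_forall_sub_le fun ε hε => ?_
    set x : ℝ := (∫⁻ ζ, F ζ ∂μ).toReal with hxdef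
    rcases le_or_gt (x - ε) 0 with h0 | h0
    · exact h0.trans (Filter.le_liminf_of_le hcb
        (Filter.Eventually.of_forall fun L => ENNReal.toReal_nonneg))
    · have hFne : (∫⁻ ζ, F ζ ∂μ) ≠ ⊤ := ne_top_of_le_ne_top hBne hchain
      have h1 : ENNReal.ofReal (x - ε) < ∫⁻ ζ, F ζ ∂μ := by
        conv_rhs => rw [← ENNReal.ofReal_toReal hFne]
        exact (ENNReal.ofReal_lt_ofReal_iff (by linarith)).mpr (by linarith)
      have h2 : ENNReal.ofReal (x - ε) < B := lt_of_lt_of_le h1 hchain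
      have hev := Filter.eventually_lt_of_lt_liminf (hBdef ▸ h2)
      refine Filter.le_liminf_of_le hcb (hev.mono fun L hL => ?_)
      have hLne : (∫⁻ ζ, FL L ζ ∂μ) ≠ ⊤ := ne_top_of_le_ne_top ENNReal.one_ne_top (hFLle1 L)
      have h4 := ENNReal.toReal_strict_mono hLne hL
      rw [ENNReal.toReal_ofReal h0.le] at h4
      exact h4.le
  exact hgoal
end
end

section
/- Let r be a compactly supported bounded probability density on ℝ, a_j > 0, and r_j(x) = a_j^{−1} r(a_j^{−1} x). For every E ∈ ℝ, the integral operator T_E^{(j)} defined by (T_E^{(j)} f)(x) = ∫_ℝ r_j(E − x − y^{−1}) |y|^{−1} f(y) dy is a bounded operator from L²(ℝ) to L²(ℝ) with operator norm at most 1. -/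
open MeasureTheory
open scoped ENNReal NNReal

noncomputable section

/-- 1D change of variables `z = y⁻¹` for Lebesgue integrals. -/
lemma lintegral_inv_subst (g : ℝ → ℝ≥0∞) :
    ∫⁻ y, g y = ∫⁻ z, ENNReal.ofReal ((z ^ 2)⁻¹) * g z⁻¹ := by
  have hs : MeasurableSet ({(0:ℝ)}ᶜ) := (measurableSet_singleton 0).compl
  have himg : (fun y : ℝ => y⁻¹) '' ({(0:ℝ)}ᶜ) = {(0:ℝ)}ᶜ := by
    ext x
    constructor
    · rintro ⟨y, hy, rfl⟩
      exact inv_ne_zero hy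
    · intro hx
      exact ⟨x⁻¹, inv_ne_zero hx, inv_inv x⟩
  have hderiv : ∀ z ∈ ({(0:ℝ)}ᶜ : Set ℝ),
      HasFDerivWithinAt (fun y : ℝ => y⁻¹)
        (ContinuousLinearMap.smulRight (1 : ℝ →L[ℝ] ℝ) (-(z ^ 2)⁻¹)) ({(0:ℝ)}ᶜ) z :=
    fun z hz => ((hasDerivAt_inv hz).hasDerivWithinAt).hasFDerivWithinAt
  have hinj : Set.InjOn (fun y : ℝ => y⁻¹) ({(0:ℝ)}ᶜ) := fun x _ y _ h => by
    simpa using congrArg Inv.inv h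
  have key := lintegral_image_eq_lintegral_abs_det_fderiv_mul volume hs hderiv hinj g
  rw [himg] at key
  calc ∫⁻ y, g y = ∫⁻ y in {(0:ℝ)}ᶜ, g y := by
        rw [restrict_compl_singleton]
    _ = ∫⁻ z in {(0:ℝ)}ᶜ,
          ENNReal.ofReal |(ContinuousLinearMap.smulRight (1 : ℝ →L[ℝ] ℝ) (-(z ^ 2)⁻¹)).det|
            * g z⁻¹ := key
    _ = ∫⁻ z in {(0:ℝ)}ᶜ, ENNReal.ofReal ((z ^ 2)⁻¹) * g z⁻¹ := by
        apply lintegral_congr fun z => ?_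
        rw [ContinuousLinearMap.smulRight_one_eq_toSpanSingleton, ContinuousLinearMap.det_toSpanSingleton, abs_neg, abs_inv, abs_pow, sq_abs]
    _ = ∫⁻ z, ENNReal.ofReal ((z ^ 2)⁻¹) * g z⁻¹ := by
        rw [restrict_compl_singleton]

/-- Cauchy–Schwarz (Jensen) for a probability density `Q`. -/
lemma lintegral_mul_sq_le (Q g : ℝ → ℝ≥0∞) (hQ : Measurable Q) (hg : Measurable g)
    (hQ1 : ∫⁻ z, Q z = 1) :
    (∫⁻ z, Q z * g z) ^ (2:ℝ) ≤ ∫⁻ z, Q z * g z ^ (2:ℝ) := by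
  have hpq : Real.HolderConjugate 2 2 := Real.holderConjugate_iff.mpr ⟨one_lt_two, by norm_num⟩
  have h := ENNReal.lintegral_mul_le_Lp_mul_Lq volume hpq
    (f := fun z => Q z ^ ((1:ℝ)/2)) (g := fun z => Q z ^ ((1:ℝ)/2) * g z)
    (hQ.pow_const _).aemeasurable ((hQ.pow_const _).mul hg).aemeasurable
  have h1 : ∀ z, (fun z => Q z ^ ((1:ℝ)/2)) z * ((fun z => Q z ^ ((1:ℝ)/2) * g z) z)
      = Q z * g z := by
    intro z
    rw [← mul_assoc, ← ENNReal.rpow_add_of_nonneg ((1:ℝ)/2) ((1:ℝ)/2) (by norm_num) (by norm_num)]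
    norm_num
  have h2 : ∀ z, (Q z ^ ((1:ℝ)/2)) ^ (2:ℝ) = Q z := by
    intro z
    rw [← ENNReal.rpow_mul]
    norm_num
  have h3 : ∀ z, (Q z ^ ((1:ℝ)/2) * g z) ^ (2:ℝ) = Q z * g z ^ (2:ℝ) := by
    intro z
    rw [ENNReal.mul_rpow_of_nonneg _ _ (by norm_num), h2]
  simp only [Pi.mul_apply] at h
  calc (∫⁻ z, Q z * g z) ^ (2:ℝ)
      ≤ ((∫⁻ z, (Q z ^ ((1:ℝ)/2)) ^ (2:ℝ)) ^ ((1:ℝ)/2)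
          * (∫⁻ z, (Q z ^ ((1:ℝ)/2) * g z) ^ (2:ℝ)) ^ ((1:ℝ)/2)) ^ (2:ℝ) := by
        apply ENNReal.rpow_le_rpow _ (by norm_num)
        refine le_trans (le_of_eq ?_) h
        exact lintegral_congr fun z => (h1 z).symm
    _ = ∫⁻ z, Q z * g z ^ (2:ℝ) := by
        simp only [h2, h3, hQ1, ENNReal.one_rpow, one_mul]
        rw [← ENNReal.rpow_mul]
        norm_num

theorem aux_norm_le
    (r : ℝ → ℝ) (hr_nonneg : ∀ x, 0 ≤ r x) (hr_bdd : ∃ M : ℝ, ∀ x, r x ≤ M)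
    (hr_supp : HasCompactSupport r) (hr_meas : Measurable r) (hr_prob : ∫ x : ℝ, r x = 1)
    (a : ℝ) (ha : 0 < a) (E : ℝ) (f : ℝ → ℝ) (hfm : Measurable f) :
    eLpNorm (fun x => ∫ y : ℝ, (a⁻¹ * r (a⁻¹ * (E - x - y⁻¹))) * |y|⁻¹ * f y) 2 volume
      ≤ eLpNorm f 2 volume := by
  obtain ⟨M, hM⟩ := hr_bdd
  set φ : ℝ → ℝ≥0∞ := fun t => ENNReal.ofReal (a⁻¹ * r (a⁻¹ * t)) with hφ_def
  have hφm : Measurable φ :=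
    ENNReal.measurable_ofReal.comp
      (measurable_const.mul (hr_meas.comp (measurable_const.mul measurable_id)))
  -- r is integrable
  have hrint : Integrable r := by
    refine ⟨hr_meas.aestronglyMeasurable, ?_⟩
    rw [HasFiniteIntegral]
    calc ∫⁻ x, ↑‖r x‖₊ ≤ ∫⁻ x, Set.indicator (tsupport r) (fun _ => ENNReal.ofReal M) x := by
          apply lintegral_mono fun x => ?_
          by_cases hx : x ∈ tsupport r
          · rw [Set.indicator_of_mem hx]
            rw [← enorm_eq_nnnorm, Real.enorm_eq_ofReal (hr_nonneg x)]
            exact ENNReal.ofReal_le_ofReal (hM x)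
          · rw [Set.indicator_of_notMem hx, image_eq_zero_of_notMem_tsupport hx]
            simp
      _ = ENNReal.ofReal M * volume (tsupport r) := by
          rw [lintegral_indicator (isClosed_tsupport r).measurableSet]
          simp [mul_comm]
      _ < ⊤ := ENNReal.mul_lt_top ENNReal.ofReal_lt_top hr_supp.measure_lt_top
  -- the rescaled density integrates to 1
  have hφ1 : ∫⁻ t, φ t = 1 := by
    have hint : Integrable (fun t : ℝ => a⁻¹ * r (a⁻¹ * t)) :=
      (hrint.comp_mul_left' (inv_ne_zero ha.ne')).const_mul _
    rw [hφ_def, ← ofReal_integral_eq_lintegral_ofReal hint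
      (Filter.Eventually.of_forall fun t => mul_nonneg (inv_nonneg.2 ha.le) (hr_nonneg _))]
    rw [integral_const_mul, Measure.integral_comp_mul_left (fun t => r t) a⁻¹, hr_prob]
    rw [inv_inv, abs_of_pos ha]
    simp [inv_mul_cancel₀ ha.ne']
  have hφc : ∀ c : ℝ, ∫⁻ t, φ (c - t) = 1 := fun c => by
    rw [(Measure.measurePreserving_sub_left volume c).lintegral_comp hφm]
    exact hφ1
  set g : ℝ → ℝ≥0∞ := fun z => ENNReal.ofReal |z|⁻¹ * ↑‖f z⁻¹‖₊ with hg_def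
  have hgm : Measurable g :=
    (ENNReal.measurable_ofReal.comp (measurable_abs.inv)).mul
      (measurable_coe_nnreal_ennreal.comp (hfm.comp measurable_inv).nnnorm)
  have hne : ∀ᵐ z : ℝ, z ≠ (0:ℝ) := by
    simp [ae_iff]
  -- Claim 1 : change of variables in the inner integral
  have claim1 : ∀ c : ℝ,
      ∫⁻ y, φ (c - y⁻¹) * (ENNReal.ofReal |y|⁻¹ * ↑‖f y‖₊) = ∫⁻ z, φ (c - z) * g z := by
    intro c
    rw [lintegral_inv_subst (fun y => φ (c - y⁻¹) * (ENNReal.ofReal |y|⁻¹ * ↑‖f y‖₊))]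
    apply lintegral_congr_ae
    filter_upwards [hne] with z hz
    have habs : ((z:ℝ) ^ 2)⁻¹ * |z| = |z|⁻¹ := by
      rw [← sq_abs]
      field_simp
    rw [inv_inv, abs_inv, inv_inv]
    calc ENNReal.ofReal ((z ^ 2)⁻¹) * (φ (c - z) * (ENNReal.ofReal |z| * ↑‖f z⁻¹‖₊))
        = φ (c - z) * ((ENNReal.ofReal ((z ^ 2)⁻¹) * ENNReal.ofReal |z|) * ↑‖f z⁻¹‖₊) := by
          ring
      _ = φ (c - z) * g z := by
          rw [← ENNReal.ofReal_mul (by positivity), habs]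
  -- Claim 4 : the substituted function has the same L² norm
  have claim4 : ∫⁻ z, g z ^ (2:ℝ) = ∫⁻ y, (↑‖f y‖₊ : ℝ≥0∞) ^ (2:ℝ) := by
    rw [lintegral_inv_subst (fun y => (↑‖f y‖₊ : ℝ≥0∞) ^ (2:ℝ))]
    apply lintegral_congr_ae
    filter_upwards [hne] with z hz
    show (ENNReal.ofReal |z|⁻¹ * ↑‖f z⁻¹‖₊) ^ (2:ℝ)
        = ENNReal.ofReal ((z ^ 2)⁻¹) * (↑‖f z⁻¹‖₊ : ℝ≥0∞) ^ (2:ℝ)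
    rw [ENNReal.mul_rpow_of_nonneg _ _ (by norm_num : (0:ℝ) ≤ 2)]
    congr 1
    rw [show ((2:ℝ)) = ((2:ℕ):ℝ) by norm_num, ENNReal.rpow_natCast,
      ← ENNReal.ofReal_pow (by positivity), inv_pow, sq_abs]
  -- the pointwise bound
  have hB : ∀ x : ℝ, (↑‖∫ y : ℝ, (a⁻¹ * r (a⁻¹ * (E - x - y⁻¹))) * |y|⁻¹ * f y‖₊ : ℝ≥0∞)
      ≤ ∫⁻ z, φ (E - x - z) * g z := by
    intro x
    refine le_trans (enorm_integral_le_lintegral_enorm _) ?_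
    rw [← claim1 (E - x)]
    apply lintegral_mono fun y => le_of_eq ?_
    rw [enorm_mul, enorm_mul]
    rw [Real.enorm_eq_ofReal (mul_nonneg (inv_nonneg.2 ha.le) (hr_nonneg _)),
      Real.enorm_eq_ofReal (inv_nonneg.2 (abs_nonneg y)), enorm_eq_nnnorm]
    ring
  -- the main estimate
  have hmain : ∫⁻ x, (↑‖∫ y : ℝ, (a⁻¹ * r (a⁻¹ * (E - x - y⁻¹))) * |y|⁻¹ * f y‖₊ : ℝ≥0∞) ^ (2:ℝ)
      ≤ ∫⁻ y, (↑‖f y‖₊ : ℝ≥0∞) ^ (2:ℝ) := by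
    calc ∫⁻ x, (↑‖∫ y : ℝ, (a⁻¹ * r (a⁻¹ * (E - x - y⁻¹))) * |y|⁻¹ * f y‖₊ : ℝ≥0∞) ^ (2:ℝ)
        ≤ ∫⁻ x, (∫⁻ z, φ (E - x - z) * g z) ^ (2:ℝ) :=
          lintegral_mono fun x => ENNReal.rpow_le_rpow (hB x) (by norm_num)
      _ ≤ ∫⁻ x, ∫⁻ z, φ (E - x - z) * g z ^ (2:ℝ) := by
          apply lintegral_mono fun x => ?_
          exact lintegral_mul_sq_le _ _
            (hφm.comp (measurable_const.sub measurable_id)) hgm (hφc (E - x))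
      _ = ∫⁻ z, ∫⁻ x, φ (E - x - z) * g z ^ (2:ℝ) := by
          apply lintegral_lintegral_swap
          apply Measurable.aemeasurable
          exact (hφm.comp ((measurable_const.sub measurable_fst).sub measurable_snd)).mul
            ((hgm.comp measurable_snd).pow_const _)
      _ = ∫⁻ z, g z ^ (2:ℝ) := by
          apply lintegral_congr fun z => ?_
          have hmx : Measurable fun x : ℝ => φ (E - x - z) :=
            hφm.comp ((measurable_const.sub measurable_id).sub measurable_const)
          rw [lintegral_mul_const _ hmx]
          have : ∀ x : ℝ, E - x - z = (E - z) - x := fun x => by ring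
          simp_rw [this]
          rw [hφc (E - z), one_mul]
      _ = ∫⁻ y, (↑‖f y‖₊ : ℝ≥0∞) ^ (2:ℝ) := claim4
  -- conclude
  rw [eLpNorm_eq_lintegral_rpow_enorm_toReal (by norm_num) (by norm_num),
    eLpNorm_eq_lintegral_rpow_enorm_toReal (by norm_num) (by norm_num)]
  simp only [ENNReal.toReal_ofNat]
  exact ENNReal.rpow_le_rpow hmain (by norm_num)

/-- The operator `T_E^{(j)} f (x) = ∫ r_j(E - x - y⁻¹) |y|⁻¹ f(y) dy`, with
`r_j(x) = a_j⁻¹ r(a_j⁻¹ x)`, maps `L²(ℝ)` to `L²(ℝ)` with operator norm at most `1`: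
for every `f ∈ L²`, `T_E^{(j)} f ∈ L²` and `‖T_E^{(j)} f‖₂ ≤ ‖f‖₂`. -/
theorem Top_L2_L2_norm_le_one
    (r : ℝ → ℝ) (hr_nonneg : ∀ x, 0 ≤ r x) (hr_bdd : ∃ M : ℝ, ∀ x, r x ≤ M)
    (hr_supp : HasCompactSupport r) (hr_meas : Measurable r) (hr_prob : ∫ x : ℝ, r x = 1)
    (a : ℝ) (ha : 0 < a) (E : ℝ) (f : ℝ → ℝ) (hf : MemLp f 2 volume) :
    MemLp (fun x => ∫ y : ℝ, (a⁻¹ * r (a⁻¹ * (E - x - y⁻¹))) * |y|⁻¹ * f y) 2 volume ∧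
      eLpNorm (fun x => ∫ y : ℝ, (a⁻¹ * r (a⁻¹ * (E - x - y⁻¹))) * |y|⁻¹ * f y) 2 volume
        ≤ eLpNorm f 2 volume := by
  -- replace f by a measurable representative
  obtain ⟨f₀, hf₀sm, hff₀⟩ := hf.1
  have hf₀m : Measurable f₀ := hf₀sm.measurable
  have hTeq : (fun x => ∫ y : ℝ, (a⁻¹ * r (a⁻¹ * (E - x - y⁻¹))) * |y|⁻¹ * f y)
      = fun x => ∫ y : ℝ, (a⁻¹ * r (a⁻¹ * (E - x - y⁻¹))) * |y|⁻¹ * f₀ y := by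
    funext x
    apply integral_congr_ae
    filter_upwards [hff₀] with y hy
    rw [hy]
  have hfeq : eLpNorm f 2 volume = eLpNorm f₀ 2 volume := eLpNorm_congr_ae hff₀
  rw [hTeq, hfeq]
  have hnorm := aux_norm_le r hr_nonneg hr_bdd hr_supp hr_meas hr_prob a ha E f₀ hf₀m
  refine ⟨⟨?_, lt_of_le_of_lt hnorm ?_⟩, hnorm⟩
  · -- strong measurability of the integral operator
    have hK : Measurable fun p : ℝ × ℝ =>
        (a⁻¹ * r (a⁻¹ * (E - p.1 - p.2⁻¹))) * |p.2|⁻¹ * f₀ p.2 := by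
      apply Measurable.mul
      apply Measurable.mul
      · exact measurable_const.mul (hr_meas.comp (measurable_const.mul
          ((measurable_const.sub measurable_fst).sub measurable_snd.inv)))
      · exact measurable_snd.abs.inv
      · exact hf₀m.comp measurable_snd
    exact (hK.stronglyMeasurable.integral_prod_right').aestronglyMeasurable
  · rw [← hfeq]
    exact hf.2
end
end

section
/- Let α ∈ (0,1) be irrational with continued fraction approximants p_k/q_k, let 0 < γ < γ̃ < 1/2, and set z_n = nα (mod 1) ∈ 𝕋. For n with |2n| ∈ [q_k, q_{k+1}), let g_n : 𝕋 → ℝ be the tent function g_n(x) = ε^{γ̃−1}(z_n + ε − x) for x ∈ [z_n, z_n + ε], g_n(x) = ε^{γ̃−1}(x + ε − z_n) for x ∈ [z_n − ε, z_n], and g_n(x) = 0 otherwise, where ε = 1/(100 q_{k+1}). Then for any sequence {μ_n}_{n∈ℤ} with μ_n ∈ [0,1], the series G = Σ_{n∈ℤ} μ_n g_n converges uniformly on 𝕋, and G is γ-Hölder continuous: there exists δ > 0 such that |G(x) − G(y)| ≤ |x − y|^γ whenever x, y ∈ 𝕋 satisfy 0 < |x − y| < δ. -/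
open MeasureTheory

noncomputable section

open GenContFract

namespace TentAux

lemma notTerm {α : ℝ} (hirr : Irrational α) (n : ℕ) : ¬(GenContFract.of α).TerminatedAt n := by
  intro h
  obtain ⟨r, hr⟩ := (terminates_iff_rat α).mp ⟨n, h⟩
  exact hirr ⟨r, hr.symm⟩

lemma sGet {α : ℝ} (hirr : Irrational α) (n : ℕ) :
    ∃ gp : Pair ℝ, (GenContFract.of α).s.get? n = some gp ∧ gp.a = 1 ∧
      ∃ m : ℤ, 1 ≤ (m:ℝ) ∧ gp.b = (m:ℝ) := by
  obtain ⟨gp, hgp⟩ := Option.ne_none_iff_exists'.1 (notTerm hirr n)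
  have ha : gp.a = 1 := of_partNum_eq_one (partNum_eq_s_a hgp)
  have hb1 : 1 ≤ gp.b := of_one_le_get?_partDen (partDen_eq_s_b hgp)
  obtain ⟨m, hm⟩ := exists_int_eq_of_partDen (partDen_eq_s_b hgp)
  exact ⟨gp, hgp, ha, m, hm ▸ hb1, hm⟩

lemma contsAux_int {α : ℝ} (hirr : Irrational α) (n : ℕ) :
    ∃ pa pb : ℤ, ((GenContFract.of α).contsAux n).a = (pa:ℝ) ∧
      ((GenContFract.of α).contsAux n).b = (pb:ℝ) := by
  induction n using Nat.twoStepInduction with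
  | zero => exact ⟨1, 0, by simp [contsAux], by simp [contsAux]⟩
  | one => exact ⟨⌊α⌋, 1, by simp [contsAux, of_h_eq_floor], by simp [contsAux]⟩
  | more n ih2 ih =>
    obtain ⟨gp, hgp, ha, m, _, hb⟩ := sGet hirr n
    obtain ⟨pa', pb', h1', h2'⟩ := ih2
    obtain ⟨pa, pb, h1, h2⟩ := ih
    rw [contsAux_recurrence hgp rfl rfl]
    exact ⟨m * pa + pa', m * pb + pb', by push_cast [ha, hb, h1, h1']; ring,
      by push_cast [ha, hb, h2, h2']; ring⟩

section Q
variable {α : ℝ} {q : ℕ → ℕ}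

lemma q_one_le (hirr : Irrational α) (hq : ∀ k, (q k : ℝ) = (GenContFract.of α).dens k)
    (n : ℕ) : 1 ≤ q n := by
  have h1 : ((Nat.fib (n+1) : ℕ) : ℝ) ≤ (GenContFract.of α).dens n :=
    succ_nth_fib_le_of_nth_den (Or.inr (notTerm hirr _))
  have h2 : (1:ℕ) ≤ Nat.fib (n+1) := Nat.fib_pos.mpr n.succ_pos
  have h3 := h1.trans_eq (hq n).symm
  have h4 : ((1:ℕ):ℝ) ≤ ((Nat.fib (n+1) : ℕ):ℝ) := by exact_mod_cast h2
  exact_mod_cast h4.trans h3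

lemma q_pos (hirr : Irrational α) (hq : ∀ k, (q k : ℝ) = (GenContFract.of α).dens k)
    (n : ℕ) : (0:ℝ) < q n := by
  exact_mod_cast Nat.lt_of_lt_of_le Nat.zero_lt_one (q_one_le hirr hq n)

lemma q_mono (hq : ∀ k, (q k : ℝ) = (GenContFract.of α).dens k) :
    Monotone q := by
  apply monotone_nat_of_le_succ
  intro n
  have := of_den_mono (v := α) (n := n)
  rw [← hq n, ← hq (n+1)] at this
  exact_mod_cast this

lemma q_rec (hirr : Irrational α) (hq : ∀ k, (q k : ℝ) = (GenContFract.of α).dens k)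
    (n : ℕ) : (q (n+1) : ℝ) + q n ≤ q (n+2) := by
  obtain ⟨gp, hgp, ha, m, hm, hb⟩ := sGet hirr (n+1)
  have hrec : (GenContFract.of α).dens (n+2) = gp.b * (GenContFract.of α).dens (n+1)
      + gp.a * (GenContFract.of α).dens n := dens_recurrence hgp rfl rfl
  rw [hq, hq, hq, hrec, ha, hb]
  nlinarith [q_pos hirr hq n, q_pos hirr hq (n+1), (hq n).symm, (hq (n+1)).symm,
    q_pos hirr hq (n+1) |>.le]

lemma conv_upper (hirr : Irrational α) (hq : ∀ k, (q k : ℝ) = (GenContFract.of α).dens k)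
    (n : ℕ) : |α - (GenContFract.of α).convs n| ≤ 1 / (q n * q (n+1)) := by
  rw [hq, hq]
  exact abs_sub_convs_le (notTerm hirr n)

lemma det_real (hirr : Irrational α) (n : ℕ) :
    ((GenContFract.of α).nums n) * ((GenContFract.of α).dens (n+1))
      - ((GenContFract.of α).dens n) * ((GenContFract.of α).nums (n+1)) = (-1)^(n+1) := by
  have h := (SimpContFract.of α).determinant (n := n)
    (notTerm hirr n)
  exact h

lemma conv_gap (hirr : Irrational α) (hq : ∀ k, (q k : ℝ) = (GenContFract.of α).dens k)
    (n : ℕ) :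
    |(GenContFract.of α).convs (n+1) - (GenContFract.of α).convs n|
      = 1 / (q n * q (n+1)) := by
  have hd := det_real hirr n
  rw [← hq n, ← hq (n+1)] at hd
  have h1 : (0:ℝ) < q n := q_pos hirr hq n
  have h2 : (0:ℝ) < q (n+1) := q_pos hirr hq (n+1)
  have hsign : ((-1:ℝ))^(n+1) = -((-1:ℝ))^n := by ring
  have key : (GenContFract.of α).nums (n+1) * (q n:ℝ)
      - (q (n+1):ℝ) * (GenContFract.of α).nums n = (-1)^n := by
    rw [hsign] at hd; linarith
  rw [conv_eq_num_div_den, conv_eq_num_div_den, ← hq n, ← hq (n+1),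
    div_sub_div _ _ h2.ne' h1.ne', key, abs_div, abs_pow, abs_neg, abs_one, one_pow,
    abs_of_pos (by positivity : (0:ℝ) < (q (n+1):ℝ) * q n), mul_comm ((q (n+1):ℝ))]

lemma conv_lower (hirr : Irrational α) (hq : ∀ k, (q k : ℝ) = (GenContFract.of α).dens k)
    (n : ℕ) : 1 / (2 * q n * q (n+1)) ≤ |α - (GenContFract.of α).convs n| := by
  have hgap := conv_gap hirr hq n
  have hup := conv_upper hirr hq (n+1)
  have h1 : (0:ℝ) < q n := q_pos hirr hq n
  have h2 : (0:ℝ) < q (n+1) := q_pos hirr hq (n+1)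
  have h3 : (0:ℝ) < q (n+2) := q_pos hirr hq (n+2)
  have hrec : (q (n+1):ℝ) + q n ≤ q (n+2) := q_rec hirr hq n
  have hmono : (q n : ℝ) ≤ q (n+1) := by exact_mod_cast q_mono hq (Nat.le_succ n)
  have htri := abs_sub_le ((GenContFract.of α).convs (n+1)) α ((GenContFract.of α).convs n)
  rw [abs_sub_comm ((GenContFract.of α).convs (n+1)) α] at htri
  have h5 : 1/((q n:ℝ) * q (n+1)) ≤ 1/((q (n+1):ℝ) * q (n+2)) + |α - (GenContFract.of α).convs n| := by
    rw [← hgap]; linarith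
  have hq2 : 1/((q (n+1):ℝ) * q (n+2)) ≤ 1/(2 * q n * q (n+1)) := by
    rw [div_le_div_iff₀ (by positivity) (by positivity)]
    nlinarith
  have heq : 1 / ((q n:ℝ) * q (n+1)) - 1/(2 * (q n:ℝ) * q (n+1)) = 1/(2 * (q n:ℝ) * q (n+1)) := by
    field_simp; ring
  linarith



lemma nums_int (hirr : Irrational α)
    (n : ℕ) : ∃ pa : ℤ, (GenContFract.of α).nums n = (pa:ℝ) := by
  obtain ⟨pa, pb, h1, h2⟩ := contsAux_int hirr (n+1)
  exact ⟨pa, by rw [num_eq_conts_a, nth_cont_eq_succ_nth_contAux, h1]⟩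

lemma den_le (hirr : Irrational α) (hq : ∀ k, (q k : ℝ) = (GenContFract.of α).dens k)
    (n : ℕ) (r : ℚ) (hr : (r:ℝ) = (GenContFract.of α).convs n) : q n ≤ r.den := by
  obtain ⟨pa, hpa⟩ := nums_int hirr n
  obtain ⟨pa', hpa'⟩ := nums_int hirr (n+1)
  have hd := det_real hirr n
  rw [← hq n, ← hq (n+1), hpa, hpa'] at hd
  have hdz : pa * (q (n+1):ℤ) - (q n : ℤ) * pa' = (-1)^(n+1) := by
    have : ((pa * (q (n+1):ℤ) - (q n : ℤ) * pa' : ℤ) : ℝ) = (((-1)^(n+1) : ℤ) : ℝ) := by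
      push_cast; push_cast at hd; linarith
    exact_mod_cast this
  have hcop : IsCoprime (q n : ℤ) pa := by
    rcases Nat.even_or_odd (n+1) with he | ho
    · refine ⟨-pa', (q (n+1):ℤ), ?_⟩
      rw [he.neg_one_pow] at hdz; linarith [hdz]
    · refine ⟨pa', -(q (n+1):ℤ), ?_⟩
      rw [ho.neg_one_pow] at hdz; linarith [hdz]
  have h1 : (0:ℝ) < q n := q_pos hirr hq n
  have hrden : (0:ℝ) < (r.den : ℝ) := by exact_mod_cast r.pos
  have hcross : (r.num : ℝ) * (q n : ℝ) = (pa : ℝ) * (r.den : ℝ) := by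
    have hconv : (GenContFract.of α).convs n = (pa:ℝ) / (q n : ℝ) := by
      rw [conv_eq_num_div_den, ← hq n, hpa]
    have h2 : ((r.num : ℝ) / (r.den:ℝ)) = (pa:ℝ) / (q n:ℝ) := by
      rw [← hconv, ← hr]; exact_mod_cast congrArg (fun t : ℚ => (t:ℝ)) (Rat.num_div_den r)
    field_simp at h2; linarith
  have hcrossz : r.num * (q n : ℤ) = pa * r.den := by exact_mod_cast hcross
  have hdvd : (q n : ℤ) ∣ (r.den : ℤ) := by
    have : (q n : ℤ) ∣ pa * r.den := ⟨r.num, by linarith [hcrossz]⟩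
    exact hcop.dvd_of_dvd_mul_left this
  exact_mod_cast Int.le_of_dvd (by exact_mod_cast r.pos) hdvd

/-- Best approximation: for `0 < |m| < q (k+1)`, `|m α - j| ≥ 1/(2 q (k+1))`. -/
lemma best_approx (hirr : Irrational α) (hq : ∀ k, (q k : ℝ) = (GenContFract.of α).dens k)
    (k : ℕ) (m j : ℤ) (hm0 : m ≠ 0) (hmlt : m.natAbs < q (k+1)) :
    1 / (2 * (q (k+1) : ℝ)) ≤ |(m:ℝ) * α - (j:ℝ)| := by
  by_contra hcon
  push_neg at hcon
  set r : ℚ := (j : ℚ) / (m : ℚ) with hrdef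
  have hmR : (0:ℝ) < |(m:ℝ)| := by
    simp only [abs_pos]; exact_mod_cast hm0
  have hrcast : (r : ℝ) = (j : ℝ) / (m : ℝ) := by rw [hrdef]; push_cast; ring
  have hden_dvd : (r.den : ℤ) ∣ m := by
    rw [hrdef, ← Rat.divInt_eq_div]; exact Rat.den_dvd j m
  have hden_le : (r.den : ℤ) ≤ (m.natAbs : ℤ) :=
    Int.le_of_dvd (by exact_mod_cast Int.natAbs_pos.mpr hm0) (Int.dvd_natAbs.mpr hden_dvd)
  have hdenR : (r.den : ℝ) ≤ |(m:ℝ)| := by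
    have h9 : ((m.natAbs : ℤ) : ℝ) = |(m:ℝ)| := by
      push_cast [Nat.cast_natAbs]; ring
    rw [← h9]; exact_mod_cast hden_le
  have hdenQ : (r.den : ℝ) < (q (k+1) : ℝ) := by
    have : (r.den:ℤ) < (q (k+1) : ℤ) := lt_of_le_of_lt hden_le (by exact_mod_cast hmlt)
    exact_mod_cast this
  have hQpos : (0:ℝ) < (q (k+1) : ℝ) := q_pos hirr hq (k+1)
  have hrpos : (0:ℝ) < (r.den : ℝ) := by exact_mod_cast r.pos
  have hsub : α - (r:ℝ) = ((m:ℝ) * α - j) / m := by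
    rw [hrcast]; field_simp
  have habs : |α - (r:ℝ)| = |(m:ℝ)*α - j| / |(m:ℝ)| := by rw [hsub, abs_div]
  have hlt : |α - (r:ℝ)| < 1 / (2 * (r.den:ℝ)^2) := by
    rw [habs]
    calc |(m:ℝ)*α - j| / |(m:ℝ)| < (1 / (2 * (q (k+1) : ℝ))) / |(m:ℝ)| := by
          gcongr
      _ = 1 / (2 * (q (k+1) : ℝ) * |(m:ℝ)|) := by rw [div_div]
      _ ≤ 1 / (2 * (r.den:ℝ)^2) := by
          rw [div_le_div_iff₀ (by positivity) (by positivity)]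
          nlinarith
  obtain ⟨N, hN⟩ := Real.exists_convs_eq_rat hlt
  have hqN : q N ≤ r.den := den_le hirr hq N r hN.symm
  have hqNR : (q N : ℝ) ≤ (r.den : ℝ) := by exact_mod_cast hqN
  have hNk : N ≤ k := by
    by_contra hnk
    push_neg at hnk
    have : q (k+1) ≤ q N := q_mono hq hnk
    have : (q (k+1):ℝ) ≤ (q N:ℝ) := by exact_mod_cast this
    linarith
  have hmonoN : (q (N+1) : ℝ) ≤ (q (k+1) : ℝ) := by
    exact_mod_cast q_mono hq (Nat.succ_le_succ hNk)
  have hlow := conv_lower hirr hq N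
  rw [hN] at hlow
  have hNpos : (0:ℝ) < q N := q_pos hirr hq N
  have hN1pos : (0:ℝ) < q (N+1) := q_pos hirr hq (N+1)
  have hup2 : |α - (r:ℝ)| < 1 / (2 * (q N:ℝ) * q (N+1)) := by
    rw [habs]
    calc |(m:ℝ)*α - j| / |(m:ℝ)| < (1 / (2 * (q (k+1) : ℝ))) / |(m:ℝ)| := by
          gcongr
      _ = 1 / (2 * (q (k+1) : ℝ) * |(m:ℝ)|) := by rw [div_div]
      _ ≤ 1 / (2 * (q N:ℝ) * q (N+1)) := by
          rw [div_le_div_iff₀ (by positivity) (by positivity)]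
          nlinarith
  linarith

lemma sqrt2_one_le : (1:ℝ) ≤ Real.sqrt 2 := by
  rw [show (1:ℝ) = Real.sqrt 1 by simp]
  exact Real.sqrt_le_sqrt (by norm_num)

lemma sqrt2_pos : (0:ℝ) < Real.sqrt 2 := lt_of_lt_of_le one_pos sqrt2_one_le

lemma q_growth (hirr : Irrational α) (hq : ∀ k, (q k : ℝ) = (GenContFract.of α).dens k) :
    ∀ j m : ℕ, (Real.sqrt 2)^j * q m ≤ Real.sqrt 2 * q (m + j) := by
  have hu1 := sqrt2_one_le
  have hu0 := sqrt2_pos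
  have hu2 : (Real.sqrt 2)^2 = 2 := Real.sq_sqrt (by norm_num)
  intro j
  induction j using Nat.twoStepInduction with
  | zero =>
    intro m
    simpa using le_mul_of_one_le_left (le_of_lt (q_pos hirr hq m)) hu1
  | one =>
    intro m
    have h : (q m:ℝ) ≤ q (m+1) := by exact_mod_cast q_mono hq (Nat.le_succ m)
    simpa using mul_le_mul_of_nonneg_left h hu0.le
  | more j ihj ihj1 =>
    intro m
    have h1 := ihj m
    have hrec := q_rec hirr hq (m+j)
    have hmono' : (q (m+j):ℝ) ≤ q (m+j+1) := by exact_mod_cast q_mono hq (Nat.le_succ (m+j))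
    have hpow : (Real.sqrt 2)^(j+2) = 2 * (Real.sqrt 2)^j := by
      rw [pow_add, hu2]; ring
    have hme : m + (j+2) = (m+j)+2 := by ring
    rw [hme, hpow]
    have hqp := q_pos hirr hq m
    have hqp2 := q_pos hirr hq (m+j)
    nlinarith [pow_pos hu0 j]

lemma E_growth (hirr : Irrational α) (hq : ∀ k, (q k : ℝ) = (GenContFract.of α).dens k)
    {m k : ℕ} (h : m ≤ k) :
    (Real.sqrt 2)^(k-m) * (100 * (q (k+1):ℝ))⁻¹ ≤ Real.sqrt 2 * (100 * (q (m+1):ℝ))⁻¹ := by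
  have hg := q_growth hirr hq (k-m) (m+1)
  rw [show m + 1 + (k - m) = k + 1 by omega] at hg
  have h1 := q_pos hirr hq (k+1)
  have h2 := q_pos hirr hq (m+1)
  rw [inv_eq_one_div, inv_eq_one_div, mul_one_div, mul_one_div,
    div_le_div_iff₀ (by positivity) (by positivity)]
  nlinarith [pow_pos sqrt2_pos (k-m)]

lemma circle_sep {c : ℝ} (a b : ℝ) (h : ∀ j : ℤ, c ≤ |a - b - j|) :
    c ≤ dist ((a : AddCircle (1:ℝ))) ((b : AddCircle (1:ℝ))) := by
  rw [dist_eq_norm]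
  have he : (a : AddCircle (1:ℝ)) - (b : AddCircle (1:ℝ)) = ((a - b : ℝ) : AddCircle (1:ℝ)) := by
    exact (QuotientAddGroup.mk_sub _ a b).symm
  rw [he, AddCircle.norm_eq]
  simpa using h (round (a - b))

lemma pow_rpow_comm {x : ℝ} (hx : 0 ≤ x) (j : ℕ) (y : ℝ) : (x ^ j) ^ y = (x ^ y) ^ j := by
  rw [← Real.rpow_natCast x j, ← Real.rpow_mul hx, mul_comm, Real.rpow_mul hx, Real.rpow_natCast]

end Q
end TentAux

/-- Let `α ∈ (0,1)` be irrational with continued fraction denominators `q k`, let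
`0 < γ < γ' < 1/2`, and let `z n = n α (mod 1)`. For `n` with `2|n| ∈ [q_k, q_{k+1})`
(witnessed by `K : ℤ → ℕ`), let `g n` be the tent function of height `ε^γ'` and half-width
`ε = 1/(100 q_{K n + 1})` centered at `z n`, i.e.
`g n x = ε^{γ'-1} · max 0 (ε - dist x (z n))`. Then for any coefficients `μ n ∈ [0,1]`, the
series `G = ∑_n μ n • g n` converges uniformly on `𝕋`, and `G` is `γ`-Hölder continuous:
`|G x - G y| ≤ dist(x,y)^γ` for all sufficiently close `x ≠ y`. -/
theorem tentSeries_uniform_and_holder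
    (α : ℝ) (hα0 : 0 < α) (hα1 : α < 1) (hirr : Irrational α)
    (γ γ' : ℝ) (hγ0 : 0 < γ) (hγγ' : γ < γ') (hγ' : γ' < 1/2)
    (q : ℕ → ℕ) (hq : ∀ k, (q k : ℝ) = (GenContFract.of α).dens k)
    (K : ℤ → ℕ)
    (hK : ∀ n : ℤ, n ≠ 0 → q (K n) ≤ 2 * n.natAbs ∧ 2 * n.natAbs < q (K n + 1))
    (μ : ℤ → ℝ) (hμ : ∀ n, μ n ∈ Set.Icc (0:ℝ) 1)
    (z : ℤ → AddCircle (1:ℝ)) (hz : ∀ n : ℤ, z n = ((n * α : ℝ) : AddCircle (1:ℝ)))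
    (eps : ℤ → ℝ) (heps : ∀ n : ℤ, eps n = 1 / (100 * (q (K n + 1) : ℝ)))
    (g : ℤ → AddCircle (1:ℝ) → ℝ)
    (hg : ∀ (n : ℤ) (x : AddCircle (1:ℝ)),
      g n x = (eps n) ^ (γ' - 1) * max 0 (eps n - dist x (z n))) :
    TendstoUniformly
      (fun (s : Finset ℤ) (x : AddCircle (1:ℝ)) => ∑ n ∈ s, μ n * g n x)
      (fun x => ∑' n : ℤ, μ n * g n x) Filter.atTop ∧
    ∃ δ : ℝ, 0 < δ ∧ ∀ x y : AddCircle (1:ℝ), x ≠ y → dist x y < δ →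
      |(∑' n : ℤ, μ n * g n x) - (∑' n : ℤ, μ n * g n y)| ≤ dist x y ^ γ := by
  classical
  have hγ'0 : 0 < γ' := hγ0.trans hγγ'
  have hγ'1 : γ' < 1 := by linarith
  set u : ℝ := Real.sqrt 2 with hu
  have hu0 : (0:ℝ) < u := TentAux.sqrt2_pos
  have hu1 : (1:ℝ) ≤ u := TentAux.sqrt2_one_le
  have hu1' : (1:ℝ) < u := by
    rw [hu, show (1:ℝ) = Real.sqrt 1 by simp]
    exact Real.sqrt_lt_sqrt (by norm_num) (by norm_num)
  set E : ℕ → ℝ := fun k => (100 * (q (k+1):ℝ))⁻¹ with hE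
  have hEq : ∀ k, E k = (100 * (q (k+1):ℝ))⁻¹ := fun k => by rw [hE]
  have hqpos : ∀ k, (0:ℝ) < q k := TentAux.q_pos hirr hq
  have hq1 : ∀ k, (1:ℝ) ≤ q k := fun k => by exact_mod_cast TentAux.q_one_le hirr hq k
  have hEpos : ∀ k, 0 < E k := fun k => by
    have := hqpos (k+1); rw [hEq]; positivity
  have hE1 : ∀ k, E k ≤ 1 := fun k => by
    rw [hEq]
    have h1 : (1:ℝ) ≤ 100 * (q (k+1):ℝ) := by nlinarith [hq1 (k+1)]
    exact inv_le_one_of_one_le₀ h1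
  have heps' : ∀ n, eps n = E (K n) := fun n => by rw [heps n, hEq, one_div]
  have hepspos : ∀ n, 0 < eps n := fun n => (heps' n) ▸ hEpos (K n)
  set b : ℝ := u⁻¹ ^ γ' with hbdef
  set c : ℝ := u⁻¹ ^ (1 - γ') with hcdef
  have hb0 : 0 < b := Real.rpow_pos_of_pos (inv_pos.mpr hu0) _
  have hblt : b < 1 := Real.rpow_lt_one (inv_nonneg.mpr hu0.le) (inv_lt_one_of_one_lt₀ hu1') hγ'0
  have hc0 : 0 < c := Real.rpow_pos_of_pos (inv_pos.mpr hu0) _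
  have hclt : c < 1 := Real.rpow_lt_one (inv_nonneg.mpr hu0.le) (inv_lt_one_of_one_lt₀ hu1') (by linarith)
  -- decay of E
  have hEbound : ∀ m k : ℕ, m ≤ k → E k ^ γ' ≤ u * E m ^ γ' * b ^ (k - m) := by
    intro m k hmk
    have hgrow : u ^ (k-m) * E k ≤ u * E m := by
      rw [hu, hEq k, hEq m]; exact TentAux.E_growth hirr hq hmk
    have hle : E k ≤ u * E m * (u⁻¹) ^ (k - m) := by
      have h1 : E k ≤ (u * E m) / u ^ (k-m) :=
        (le_div_iff₀ (pow_pos hu0 _)).mpr (by nlinarith [hgrow])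
      calc E k ≤ (u * E m)/u^(k-m) := h1
        _ = u * E m * (u⁻¹)^(k-m) := by rw [div_eq_mul_inv, inv_pow]
    have huEm : (0:ℝ) ≤ u * E m := mul_nonneg hu0.le (hEpos m).le
    calc E k ^ γ' ≤ (u * E m * (u⁻¹)^(k-m)) ^ γ' :=
          Real.rpow_le_rpow (hEpos k).le hle hγ'0.le
      _ = u ^ γ' * E m ^ γ' * ((u⁻¹)^(k-m)) ^ γ' := by
          rw [Real.mul_rpow huEm (by positivity), Real.mul_rpow hu0.le (hEpos m).le]
      _ = u ^ γ' * E m ^ γ' * b ^ (k-m) := by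
          rw [TentAux.pow_rpow_comm (inv_nonneg.mpr hu0.le)]
      _ ≤ u * E m ^ γ' * b ^ (k-m) := by
          have h2 : u ^ γ' ≤ u := by
            calc u ^ γ' ≤ u ^ (1:ℝ) := Real.rpow_le_rpow_of_exponent_le hu1 (by linarith)
              _ = u := Real.rpow_one u
          exact mul_le_mul_of_nonneg_right
            (mul_le_mul_of_nonneg_right h2 (Real.rpow_nonneg (hEpos m).le _))
            (pow_nonneg hb0.le _)
  -- geometric sums
  have hgeo : ∀ {ι : Type} (F : Finset ι) (r : ℝ), 0 ≤ r → r < 1 → ∀ (f : ι → ℕ),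
      (∀ x ∈ F, ∀ y ∈ F, f x = f y → x = y) →
      ∑ k ∈ F, r ^ (f k) ≤ (1-r)⁻¹ := by
    intro ι F r hr0 hr1 f hinjF
    rw [show ∑ k ∈ F, r ^ f k = ∑ i ∈ F.image f, r ^ i from (Finset.sum_image hinjF).symm]
    exact (Summable.sum_le_tsum _ (fun i _ => pow_nonneg hr0 i)
      (summable_geometric_of_lt_one hr0 hr1)).trans_eq (tsum_geometric_of_lt_one hr0 hr1)
  -- basic tent facts
  have hgnonneg : ∀ n x, 0 ≤ g n x := by
    intro n x
    rw [hg]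
    exact mul_nonneg (Real.rpow_nonneg (hepspos n).le _) (le_max_left _ _)
  have hgle : ∀ n x, g n x ≤ E (K n) ^ γ' := by
    intro n x
    rw [hg, ← heps' n]
    have h1 : max 0 (eps n - dist x (z n)) ≤ eps n :=
      max_le (hepspos n).le (by linarith [dist_nonneg (x := x) (y := z n)])
    calc eps n ^ (γ'-1) * max 0 (eps n - dist x (z n)) ≤ eps n ^ (γ'-1) * eps n :=
          mul_le_mul_of_nonneg_left h1 (Real.rpow_nonneg (hepspos n).le _)
      _ = eps n ^ ((γ'-1) + 1) := by rw [Real.rpow_add (hepspos n), Real.rpow_one]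
      _ = eps n ^ γ' := by norm_num
  have hsupp : ∀ n x, g n x ≠ 0 → dist x (z n) < eps n := by
    intro n x h
    by_contra hcon
    push_neg at hcon
    apply h
    rw [hg, max_eq_left (by linarith), mul_zero]
  have hlip : ∀ n (x y : AddCircle (1:ℝ)), |g n x - g n y| ≤ E (K n) ^ (γ'-1) * dist x y := by
    intro n x y
    rw [hg n x, hg n y, ← mul_sub, abs_mul,
      abs_of_nonneg (Real.rpow_nonneg (hepspos n).le _), ← heps' n]
    have h2 : |max 0 (eps n - dist x (z n)) - max 0 (eps n - dist y (z n))| ≤ dist x y := by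
      rw [max_comm 0 (eps n - dist x (z n)), max_comm 0 (eps n - dist y (z n))]
      refine (abs_max_sub_max_le_abs _ _ _).trans ?_
      have h3 : (eps n - dist x (z n)) - (eps n - dist y (z n)) = dist y (z n) - dist x (z n) := by
        ring
      rw [h3, abs_sub_comm]
      exact abs_dist_sub_le x y (z n)
    exact mul_le_mul_of_nonneg_left h2 (Real.rpow_nonneg (hepspos n).le _)
  have hheight : ∀ n (x y : AddCircle (1:ℝ)), |g n x - g n y| ≤ E (K n) ^ γ' := by
    intro n x y
    rw [abs_sub_le_iff]
    constructor
    · linarith [hgle n x, hgnonneg n y]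
    · linarith [hgle n y, hgnonneg n x]
  -- separation and injectivity
  have hsep : ∀ n1 n2 : ℤ, n1 ≠ 0 → n2 ≠ 0 → n1 ≠ n2 → K n1 = K n2 →
      1 / (2 * (q (K n1 + 1):ℝ)) ≤ dist (z n1) (z n2) := by
    intro n1 n2 h1 h2 hne hKK
    rw [hz n1, hz n2]
    apply TentAux.circle_sep
    intro j
    have hnat : (n1 - n2).natAbs < q (K n1 + 1) := by
      have ha := (hK n1 h1).2
      have hb := (hK n2 h2).2
      rw [← hKK] at hb
      have hc := Int.natAbs_sub_le n1 n2
      omega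
    have hba := TentAux.best_approx hirr hq (K n1) (n1 - n2) j (sub_ne_zero.mpr hne) hnat
    calc 1/(2*(q (K n1 +1):ℝ)) ≤ |((n1 - n2 : ℤ):ℝ) * α - j| := hba
      _ = |(n1:ℝ) * α - (n2:ℝ) * α - j| := by congr 1; push_cast; ring
  have hinj : ∀ (x : AddCircle (1:ℝ)) (n1 n2 : ℤ), n1 ≠ 0 → n2 ≠ 0 →
      g n1 x ≠ 0 → g n2 x ≠ 0 → K n1 = K n2 → n1 = n2 := by
    intro x n1 n2 h1 h2 hg1 hg2 hKK
    by_contra hne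
    have hd1 : dist x (z n1) < eps n1 := hsupp n1 x hg1
    have hd2 : dist x (z n2) < eps n2 := hsupp n2 x hg2
    have hzz : dist (z n1) (z n2) ≤ dist (z n1) x + dist x (z n2) := dist_triangle _ _ _
    have hsep' := hsep n1 n2 h1 h2 hne hKK
    rw [heps' n1] at hd1
    rw [heps' n2, ← hKK] at hd2
    rw [dist_comm (z n1) x] at hzz
    have hQ := hqpos (K n1 + 1)
    rw [hEq] at hd1 hd2
    have hlt : 2 * (100 * (q (K n1 + 1):ℝ))⁻¹ < 1/(2 * (q (K n1 + 1):ℝ)) := by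
      rw [inv_eq_one_div, mul_one_div, div_lt_div_iff₀ (by positivity) (by positivity)]
      nlinarith
    linarith
  -- key uniform block bound
  have key : ∀ (m : ℕ) (t : Finset ℤ) (x : AddCircle (1:ℝ)),
      (∀ n ∈ t, n ≠ 0 ∧ q m ≤ 2 * n.natAbs) →
      ∑ n ∈ t, μ n * g n x ≤ u * E m ^ γ' * (1-b)⁻¹ := by
    intro m t x ht
    have hsub : ∑ n ∈ t.filter (fun n => g n x ≠ 0), μ n * g n x = ∑ n ∈ t, μ n * g n x :=
      Finset.sum_filter_of_ne (fun n _ h hg0 => h (by rw [hg0, mul_zero]))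
    rw [← hsub]
    set t' := t.filter (fun n => g n x ≠ 0) with ht'
    have hmem : ∀ n ∈ t', n ≠ 0 ∧ q m ≤ 2 * n.natAbs ∧ g n x ≠ 0 := by
      intro n hn
      rw [ht', Finset.mem_filter] at hn
      exact ⟨(ht n hn.1).1, (ht n hn.1).2, hn.2⟩
    have hmK : ∀ n ∈ t', m ≤ K n := by
      intro n hn
      obtain ⟨h0, hqm, _⟩ := hmem n hn
      by_contra hcon
      push_neg at hcon
      have h5 := TentAux.q_mono hq (show K n + 1 ≤ m by omega)
      have h6 := (hK n h0).2
      omega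
    have hstep : ∑ n ∈ t', μ n * g n x ≤ ∑ n ∈ t', u * E m ^ γ' * b ^ (K n - m) := by
      apply Finset.sum_le_sum
      intro n hn
      obtain ⟨h0, hqm, _⟩ := hmem n hn
      calc μ n * g n x ≤ 1 * (E (K n) ^ γ') := by
            apply mul_le_mul (hμ n).2 (hgle n x) (hgnonneg n x) zero_le_one
        _ = E (K n) ^ γ' := one_mul _
        _ ≤ u * E m ^ γ' * b ^ (K n - m) := hEbound m (K n) (hmK n hn)
    have hinj' : ∀ a ∈ t', ∀ a2 ∈ t', K a - m = K a2 - m → a = a2 := by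
      intro a ha a2 ha2 hKe
      obtain ⟨h0a, _, hga⟩ := hmem a ha
      obtain ⟨h0b, _, hgb⟩ := hmem a2 ha2
      exact hinj x a a2 h0a h0b hga hgb (by have := hmK a ha; have := hmK a2 ha2; omega)
    calc ∑ n ∈ t', μ n * g n x ≤ ∑ n ∈ t', u * E m ^ γ' * b ^ (K n - m) := hstep
      _ = u * E m ^ γ' * ∑ n ∈ t', b ^ (K n - m) := by rw [Finset.mul_sum]
      _ ≤ u * E m ^ γ' * (1-b)⁻¹ := by
          apply mul_le_mul_of_nonneg_left (hgeo t' b hb0.le hblt _ hinj')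
          exact mul_nonneg hu0.le (Real.rpow_nonneg (hEpos m).le _)
  -- summability
  have hsummable : ∀ x, Summable (fun n => μ n * g n x) := by
    intro x
    set s1 : Finset ℤ := Finset.Icc (-(q 0 : ℤ)) ((q 0 : ℤ)) with hs1
    apply summable_of_sum_le (c := (∑ n ∈ s1, E (K n) ^ γ') + u * E 0 ^ γ' * (1-b)⁻¹)
      (fun n => mul_nonneg (hμ n).1 (hgnonneg n x))
    intro t
    rw [← Finset.sum_inter_add_sum_sdiff t s1 (fun n => μ n * g n x)]
    have hpart1 : ∑ n ∈ t ∩ s1, μ n * g n x ≤ ∑ n ∈ s1, E (K n) ^ γ' := by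
      calc ∑ n ∈ t ∩ s1, μ n * g n x ≤ ∑ n ∈ t ∩ s1, E (K n) ^ γ' := by
            apply Finset.sum_le_sum
            intro n _
            calc μ n * g n x ≤ 1 * (E (K n) ^ γ') :=
                  mul_le_mul (hμ n).2 (hgle n x) (hgnonneg n x) zero_le_one
              _ = E (K n) ^ γ' := one_mul _
        _ ≤ ∑ n ∈ s1, E (K n) ^ γ' := by
            apply Finset.sum_le_sum_of_subset_of_nonneg (Finset.inter_subset_right)
            intro n _ _
            exact Real.rpow_nonneg (hEpos (K n)).le _
    have hpart2 : ∑ n ∈ t \ s1, μ n * g n x ≤ u * E 0 ^ γ' * (1-b)⁻¹ := by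
      apply key 0
      intro n hn
      rw [Finset.mem_sdiff, hs1, Finset.mem_Icc] at hn
      have h1 := TentAux.q_one_le hirr hq 0
      omega
    linarith
  constructor
  · -- uniform convergence
    rw [Metric.tendstoUniformly_iff]
    intro ε hε
    have hCpos : 0 < u * u * (1-b)⁻¹ := by
      have : 0 < (1-b)⁻¹ := inv_pos.mpr (by linarith)
      positivity
    obtain ⟨m, hm⟩ : ∃ m : ℕ, u * u * (1-b)⁻¹ * b ^ m < ε := by
      obtain ⟨m, hm⟩ := exists_pow_lt_of_lt_one (show (0:ℝ) < ε / (u * u * (1-b)⁻¹) by positivity) hblt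
      refine ⟨m, ?_⟩
      calc u * u * (1-b)⁻¹ * b ^ m < u * u * (1-b)⁻¹ * (ε / (u * u * (1-b)⁻¹)) := by
            exact mul_lt_mul_of_pos_left hm hCpos
        _ = ε := by
            rw [mul_comm]
            exact div_mul_cancel₀ ε hCpos.ne'
    rw [Filter.eventually_atTop]
    refine ⟨Finset.Icc (-(q m : ℤ)) ((q m : ℤ)), ?_⟩
    intro s hs x
    have hsum := hsummable x
    have hcompl := Summable.sum_add_tsum_compl (s := s) hsum
    rw [Real.dist_eq]
    have htail : ∑' (n : ↑((↑s : Set ℤ)ᶜ)), μ (n:ℤ) * g (n:ℤ) x ≤ u * E m ^ γ' * (1-b)⁻¹ := by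
      apply Summable.tsum_le_of_sum_le (hsum.subtype _)
      intro ts
      refine le_trans (le_of_eq (Finset.sum_image (f := fun n => μ n * g n x)
        (g := Subtype.val) (fun a _ a2 _ h => Subtype.ext h)).symm) (key m _ x ?_)
      intro n hn
      rw [Finset.mem_image] at hn
      obtain ⟨i, _, rfl⟩ := hn
      have hns : (i:ℤ) ∉ s := i.2
      have hni : (i:ℤ) ∉ Finset.Icc (-(q m : ℤ)) ((q m : ℤ)) := fun hmem => hns (hs hmem)
      rw [Finset.mem_Icc] at hni
      have h1 := TentAux.q_one_le hirr hq m
      omega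
    have htail0 : (0:ℝ) ≤ ∑' (n : ↑((↑s : Set ℤ)ᶜ)), μ (n:ℤ) * g (n:ℤ) x :=
      tsum_nonneg (fun i => mul_nonneg (hμ _).1 (hgnonneg _ x))
    have heq2 : (∑' n, μ n * g n x) - ∑ n ∈ s, μ n * g n x
        = ∑' (n : ↑((↑s : Set ℤ)ᶜ)), μ (n:ℤ) * g (n:ℤ) x := by linarith
    rw [heq2, abs_of_nonneg htail0]
    have hEm : E m ^ γ' ≤ u * b ^ m := by
      have h1 := hEbound 0 m (Nat.zero_le m)
      rw [Nat.sub_zero] at h1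
      have h2 : E 0 ^ γ' ≤ 1 := Real.rpow_le_one (hEpos 0).le (hE1 0) hγ'0.le
      nlinarith [mul_nonneg (mul_nonneg hu0.le (sub_nonneg.mpr h2)) (pow_nonneg hb0.le m)]
    calc ∑' (n : ↑((↑s : Set ℤ)ᶜ)), μ (n:ℤ) * g (n:ℤ) x ≤ u * E m ^ γ' * (1-b)⁻¹ := htail
      _ ≤ u * (u * b ^ m) * (1-b)⁻¹ := by
          apply mul_le_mul_of_nonneg_right (mul_le_mul_of_nonneg_left hEm hu0.le)
          exact inv_nonneg.mpr (by linarith)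
      _ = u * u * (1-b)⁻¹ * b ^ m := by ring
      _ < ε := hm
  · -- Hölder part
    have hb1' : (0:ℝ) < 1 - b := by linarith
    have hc1' : (0:ℝ) < 1 - c := by linarith
    set C0 : ℝ := u * ((1-b)⁻¹ + (1-c)⁻¹) with hC0
    have hC0pos : 0 < C0 := by
      rw [hC0]
      have h1 : 0 < (1-b)⁻¹ := inv_pos.mpr hb1'
      have h2 : 0 < (1-c)⁻¹ := inv_pos.mpr hc1'
      positivity
    have hDpos : (0:ℝ) < 3 * C0 := by linarith
    have hexp0 : (0:ℝ) < γ' - γ := by linarith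
    refine ⟨min 1 ((3*C0)⁻¹ ^ ((γ'-γ)⁻¹)),
      lt_min one_pos (Real.rpow_pos_of_pos (inv_pos.mpr hDpos) _), ?_⟩
    intro x y hxy hdlt
    set d : ℝ := dist x y with hd
    have hd0 : 0 < d := dist_pos.mpr hxy
    have hex : ∃ k, E k ≤ d := by
      obtain ⟨k, hk⟩ := exists_pow_lt_of_lt_one (show (0:ℝ) < d / u by positivity) (inv_lt_one_of_one_lt₀ hu1')
      refine ⟨k, ?_⟩
      have hgrow : u ^ (k - 0) * E k ≤ u * E 0 := by
        rw [hu, hEq k, hEq 0]; exact TentAux.E_growth hirr hq (Nat.zero_le k)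
      rw [Nat.sub_zero] at hgrow
      have hpk : (0:ℝ) < u ^ k := pow_pos hu0 k
      have h6 : E k ≤ u * E 0 / u ^ k := (le_div_iff₀ hpk).mpr (by rw [mul_comm]; exact hgrow)
      have h7 : u * E 0 / u ^ k ≤ u / u ^ k :=
        (div_le_div_iff_of_pos_right hpk).mpr (mul_le_of_le_one_right hu0.le (hE1 0))
      have h8 : u / u^k = u * (u⁻¹)^k := by rw [div_eq_mul_inv, inv_pow]
      have h9 : u * (u⁻¹)^k < u * (d/u) := mul_lt_mul_of_pos_left hk hu0
      have h10 : u * (d/u) = d := by field_simp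
      linarith
    set m := Nat.find hex with hm
    have hEm : E m ≤ d := Nat.find_spec hex
    have hEm' : ∀ k, k < m → d < E k := fun k hk => lt_of_not_ge (Nat.find_min hex hk)
    have hphi : ∀ k : ℕ, min (E k ^ (γ'-1) * d) (E k ^ γ')
        ≤ u * d ^ γ' * (if k < m then c ^ (m - 1 - k) else b ^ (k - m)) := by
      intro k
      by_cases hkm : k < m
      · rw [if_pos hkm]
        have hk1 : k ≤ m - 1 := by omega
        have hgrow : u ^ (m-1-k) * E (m-1) ≤ u * E k := by
          rw [hu, hEq (m-1), hEq k]
          exact TentAux.E_growth hirr hq hk1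
        have hdEm1 : d < E (m-1) := hEm' (m-1) (by omega)
        have hlow : u⁻¹ * u ^ (m-1-k) * d ≤ E k := by
          have h1 : u⁻¹ * u ^ (m-1-k) * d ≤ u⁻¹ * (u ^ (m-1-k) * E (m-1)) := by
            have h2 : u ^ (m-1-k) * d ≤ u ^ (m-1-k) * E (m-1) :=
              mul_le_mul_of_nonneg_left hdEm1.le (pow_nonneg hu0.le _)
            calc u⁻¹ * u ^ (m-1-k) * d = u⁻¹ * (u ^ (m-1-k) * d) := by ring
              _ ≤ _ := mul_le_mul_of_nonneg_left h2 (inv_nonneg.mpr hu0.le)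
          have h3 : u⁻¹ * (u ^ (m-1-k) * E (m-1)) ≤ u⁻¹ * (u * E k) :=
            mul_le_mul_of_nonneg_left hgrow (inv_nonneg.mpr hu0.le)
          have h4 : u⁻¹ * (u * E k) = E k := by field_simp
          linarith
        have h0 : (0:ℝ) < u⁻¹ * u ^ (m-1-k) * d := by positivity
        have hrle : E k ^ (γ'-1) ≤ (u⁻¹ * u ^ (m-1-k) * d) ^ (γ'-1) :=
          Real.rpow_le_rpow_of_nonpos h0 hlow (by linarith)
        have hexpand : (u⁻¹ * u ^ (m-1-k) * d) ^ (γ'-1)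
            = (u⁻¹)^(γ'-1:ℝ) * (u ^ (γ'-1:ℝ))^(m-1-k) * d ^ (γ'-1:ℝ) := by
          rw [Real.mul_rpow (by positivity) hd0.le, Real.mul_rpow (by positivity) (by positivity),
            TentAux.pow_rpow_comm hu0.le]
        have e2 : u ^ (γ'-1:ℝ) = c := by
          rw [hcdef, Real.inv_rpow hu0.le, ← Real.rpow_neg hu0.le]
          norm_num
        have e1 : (u⁻¹:ℝ) ^ (γ'-1:ℝ) = u ^ (1-γ':ℝ) := by
          rw [Real.inv_rpow hu0.le, ← Real.rpow_neg hu0.le]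
          norm_num
        have e3 : u ^ ((1:ℝ)-γ') ≤ u := by
          calc u ^ ((1:ℝ)-γ') ≤ u ^ (1:ℝ) := Real.rpow_le_rpow_of_exponent_le hu1 (by linarith)
            _ = u := Real.rpow_one u
        have e4 : d ^ (γ'-1:ℝ) * d = d ^ γ' := by
          rw [show d ^ (γ'-1:ℝ) * d = d ^ (γ'-1:ℝ) * d ^ (1:ℝ) by rw [Real.rpow_one],
            ← Real.rpow_add hd0]
          norm_num
        calc min (E k ^ (γ'-1) * d) (E k ^ γ') ≤ E k ^ (γ'-1) * d := min_le_left _ _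
          _ ≤ ((u⁻¹ * u ^ (m-1-k) * d) ^ (γ'-1)) * d := mul_le_mul_of_nonneg_right hrle hd0.le
          _ = u ^ (1-γ':ℝ) * (c^(m-1-k) * (d^(γ'-1:ℝ) * d)) := by rw [hexpand, e2, e1]; ring
          _ = u ^ (1-γ':ℝ) * (c^(m-1-k) * d^γ') := by rw [e4]
          _ ≤ u * (c^(m-1-k) * d^γ') := by
              apply mul_le_mul_of_nonneg_right e3
              exact mul_nonneg (pow_nonneg hc0.le _) (Real.rpow_nonneg hd0.le _)
          _ = u * d ^ γ' * c^(m-1-k) := by ring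
      · rw [if_neg hkm]
        push_neg at hkm
        calc min (E k ^ (γ'-1) * d) (E k ^ γ') ≤ E k ^ γ' := min_le_right _ _
          _ ≤ u * E m ^ γ' * b ^ (k-m) := hEbound m k hkm
          _ ≤ u * d ^ γ' * b ^ (k-m) := by
              have h5 : E m ^ γ' ≤ d ^ γ' := Real.rpow_le_rpow (hEpos m).le hEm hγ'0.le
              exact mul_le_mul_of_nonneg_right (mul_le_mul_of_nonneg_left h5 hu0.le)
                (pow_nonneg hb0.le _)
    have hdγ : (0:ℝ) ≤ d ^ γ' := Real.rpow_nonneg hd0.le _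
    have hPHI : ∀ F : Finset ℕ, ∑ k ∈ F, min (E k ^ (γ'-1) * d) (E k ^ γ') ≤ C0 * d ^ γ' := by
      intro F
      calc ∑ k ∈ F, min (E k ^ (γ'-1) * d) (E k ^ γ')
          ≤ ∑ k ∈ F, u * d ^ γ' * (if k < m then c ^ (m - 1 - k) else b ^ (k - m)) :=
            Finset.sum_le_sum (fun k _ => hphi k)
        _ = (∑ k ∈ F.filter (fun k => k < m), u * d ^ γ' * c ^ (m-1-k))
            + ∑ k ∈ F.filter (fun k => ¬ k < m), u * d ^ γ' * b ^ (k-m) := by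
            rw [← Finset.sum_filter_add_sum_filter_not F (fun k => k < m)]
            congr 1
            · apply Finset.sum_congr rfl; intro k hk
              rw [if_pos (Finset.mem_filter.mp hk).2]
            · apply Finset.sum_congr rfl; intro k hk
              rw [if_neg (Finset.mem_filter.mp hk).2]
        _ ≤ u * d ^ γ' * (1-c)⁻¹ + u * d ^ γ' * (1-b)⁻¹ := by
            apply add_le_add
            · rw [← Finset.mul_sum]
              refine mul_le_mul_of_nonneg_left ?_ (mul_nonneg hu0.le hdγ)
              apply hgeo _ c hc0.le hclt
              intro a ha a2 ha2 he
              have h1 := (Finset.mem_filter.mp ha).2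
              have h2 := (Finset.mem_filter.mp ha2).2
              omega
            · rw [← Finset.mul_sum]
              refine mul_le_mul_of_nonneg_left ?_ (mul_nonneg hu0.le hdγ)
              apply hgeo _ b hb0.le hblt
              intro a ha a2 ha2 he
              have h1 := (Finset.mem_filter.mp ha).2
              have h2 := (Finset.mem_filter.mp ha2).2
              omega
        _ = C0 * d ^ γ' := by rw [hC0]; ring
    have hphiK : ∀ n : ℤ, |μ n * g n x - μ n * g n y|
        ≤ min (E (K n) ^ (γ'-1) * d) (E (K n) ^ γ') := by
      intro n
      have h1 : |μ n * g n x - μ n * g n y| = μ n * |g n x - g n y| := by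
        rw [← mul_sub, abs_mul, abs_of_nonneg (hμ n).1]
      have h2 : μ n * |g n x - g n y| ≤ |g n x - g n y| :=
        mul_le_of_le_one_left (abs_nonneg _) (hμ n).2
      rw [h1]
      refine le_min (h2.trans ?_) (h2.trans (hheight n x y))
      rw [hd]
      exact hlip n x y
    have hDelta : ∀ t : Finset ℤ, ∑ n ∈ t, |μ n * g n x - μ n * g n y|
        ≤ 3 * (C0 * d ^ γ') := by
      intro t
      set t1 := t.filter (fun n => n ≠ 0 ∧ g n x ≠ 0) with ht1
      set t2 := t.filter (fun n => n ≠ 0 ∧ g n x = 0 ∧ g n y ≠ 0) with ht2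
      set t0 := t.filter (fun n => n = 0) with ht0
      have hsub2 : t1 ∪ t2 ∪ t0 ⊆ t := by
        intro n hn
        rcases Finset.mem_union.mp hn with h | h
        · rcases Finset.mem_union.mp h with h | h
          · exact Finset.mem_of_mem_filter n h
          · exact Finset.mem_of_mem_filter n h
        · exact Finset.mem_of_mem_filter n h
      have hzero : ∀ n ∈ t, n ∉ t1 ∪ t2 ∪ t0 → |μ n * g n x - μ n * g n y| = 0 := by
        intro n hn hnot
        have h0 : n ≠ 0 := by
          intro h0
          exact hnot (Finset.mem_union_right _ (Finset.mem_filter.mpr ⟨hn, h0⟩))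
        have hgx : g n x = 0 := by
          by_contra hne
          exact hnot (Finset.mem_union_left _ (Finset.mem_union_left _
            (Finset.mem_filter.mpr ⟨hn, h0, hne⟩)))
        have hgy : g n y = 0 := by
          by_contra hne
          exact hnot (Finset.mem_union_left _ (Finset.mem_union_right _
            (Finset.mem_filter.mpr ⟨hn, h0, hgx, hne⟩)))
        rw [hgx, hgy]; simp
      rw [← Finset.sum_subset hsub2 hzero]
      have hd12 : Disjoint t1 t2 := by
        rw [Finset.disjoint_left]
        intro a ha1 ha2
        exact (Finset.mem_filter.mp ha1).2.2 (Finset.mem_filter.mp ha2).2.2.1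
      have hd10 : Disjoint (t1 ∪ t2) t0 := by
        rw [Finset.disjoint_left]
        intro a ha1 ha0
        have h0 := (Finset.mem_filter.mp ha0).2
        rcases Finset.mem_union.mp ha1 with h | h
        · exact (Finset.mem_filter.mp h).2.1 h0
        · exact (Finset.mem_filter.mp h).2.1 h0
      rw [Finset.sum_union hd10, Finset.sum_union hd12]
      have hbound : ∀ (t' : Finset ℤ) (w : AddCircle (1:ℝ)), (∀ n ∈ t', n ≠ 0 ∧ g n w ≠ 0) →
          ∑ n ∈ t', |μ n * g n x - μ n * g n y| ≤ C0 * d ^ γ' := by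
        intro t' w hw
        calc ∑ n ∈ t', |μ n * g n x - μ n * g n y|
            ≤ ∑ n ∈ t', min (E (K n) ^ (γ'-1) * d) (E (K n) ^ γ') :=
              Finset.sum_le_sum (fun n _ => hphiK n)
          _ = ∑ k ∈ t'.image K, min (E k ^ (γ'-1) * d) (E k ^ γ') := by
              refine (Finset.sum_image (f := fun k => min (E k ^ (γ'-1) * d) (E k ^ γ'))
                (g := K) ?_).symm
              intro a ha a2 ha2 he
              exact hinj w a a2 (hw a ha).1 (hw a2 ha2).1 (hw a ha).2 (hw a2 ha2).2 he
          _ ≤ C0 * d ^ γ' := hPHI _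
      have hbnd1 : ∑ n ∈ t1, |μ n * g n x - μ n * g n y| ≤ C0 * d ^ γ' := by
        refine hbound t1 x (fun n hn => ?_)
        exact ⟨(Finset.mem_filter.mp hn).2.1, (Finset.mem_filter.mp hn).2.2⟩
      have hbnd2 : ∑ n ∈ t2, |μ n * g n x - μ n * g n y| ≤ C0 * d ^ γ' := by
        refine hbound t2 y (fun n hn => ?_)
        exact ⟨(Finset.mem_filter.mp hn).2.1, (Finset.mem_filter.mp hn).2.2.2⟩
      have hbnd0 : ∑ n ∈ t0, |μ n * g n x - μ n * g n y| ≤ C0 * d ^ γ' := by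
        have ht0sub : t0 ⊆ {0} := by
          intro a ha
          rw [Finset.mem_singleton]
          exact (Finset.mem_filter.mp ha).2
        calc ∑ n ∈ t0, |μ n * g n x - μ n * g n y|
            ≤ ∑ n ∈ t0, min (E (K n) ^ (γ'-1) * d) (E (K n) ^ γ') :=
              Finset.sum_le_sum (fun n _ => hphiK n)
          _ ≤ ∑ n ∈ ({0} : Finset ℤ), min (E (K n) ^ (γ'-1) * d) (E (K n) ^ γ') := by
              refine Finset.sum_le_sum_of_subset_of_nonneg ht0sub (fun n _ _ => ?_)
              exact le_min (mul_nonneg (Real.rpow_nonneg (hEpos _).le _) hd0.le)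
                (Real.rpow_nonneg (hEpos _).le _)
          _ = min (E (K 0) ^ (γ'-1) * d) (E (K 0) ^ γ') := Finset.sum_singleton _ _
          _ ≤ ∑ k ∈ ({K 0} : Finset ℕ), min (E k ^ (γ'-1) * d) (E k ^ γ') := by
              rw [Finset.sum_singleton]
          _ ≤ C0 * d ^ γ' := hPHI _
      linarith
    have habs_sum : Summable (fun n => |μ n * g n x - μ n * g n y|) := by
      refine Summable.of_nonneg_of_le (fun n => abs_nonneg _)
        (fun n => ?_) ((hsummable x).add (hsummable y))
      calc |μ n * g n x - μ n * g n y| ≤ |μ n * g n x| + |μ n * g n y| := by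
            rw [sub_eq_add_neg]
            exact (abs_add_le _ _).trans (by rw [abs_neg])
        _ = μ n * g n x + μ n * g n y := by
            rw [abs_of_nonneg (mul_nonneg (hμ n).1 (hgnonneg n x)),
              abs_of_nonneg (mul_nonneg (hμ n).1 (hgnonneg n y))]
    have hsplit : (∑' n, μ n * g n x) - (∑' n, μ n * g n y)
        = ∑' n, (μ n * g n x - μ n * g n y) := (Summable.tsum_sub (hsummable x) (hsummable y)).symm
    have habs : |∑' n, (μ n * g n x - μ n * g n y)|
        ≤ ∑' n, |μ n * g n x - μ n * g n y| := by
      simpa [Real.norm_eq_abs] using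
        norm_tsum_le_tsum_norm (f := fun n => μ n * g n x - μ n * g n y)
          (by simpa [Real.norm_eq_abs] using habs_sum)
    have htsum_le : ∑' n, |μ n * g n x - μ n * g n y| ≤ 3 * (C0 * d ^ γ') :=
      Summable.tsum_le_of_sum_le habs_sum hDelta
    have hd1 : d ≤ (3*C0)⁻¹ ^ ((γ'-γ)⁻¹) := (lt_of_lt_of_le hdlt (min_le_right _ _)).le
    have h7 : d ^ (γ'-γ) ≤ (3*C0)⁻¹ := by
      calc d ^ (γ'-γ) ≤ ((3*C0)⁻¹ ^ ((γ'-γ)⁻¹)) ^ (γ'-γ) :=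
            Real.rpow_le_rpow hd0.le hd1 hexp0.le
        _ = (3*C0)⁻¹ ^ (((γ'-γ)⁻¹) * (γ'-γ)) := (Real.rpow_mul (inv_nonneg.mpr hDpos.le) _ _).symm
        _ = (3*C0)⁻¹ := by rw [inv_mul_cancel₀ hexp0.ne', Real.rpow_one]
    have h8 : d ^ γ' = d ^ γ * d ^ (γ'-γ) := by
      rw [← Real.rpow_add hd0]
      ring_nf
    calc |(∑' n, μ n * g n x) - (∑' n, μ n * g n y)|
        = |∑' n, (μ n * g n x - μ n * g n y)| := by rw [hsplit]
      _ ≤ ∑' n, |μ n * g n x - μ n * g n y| := habs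
      _ ≤ 3 * (C0 * d ^ γ') := htsum_le
      _ = (3*C0) * d ^ (γ'-γ) * d ^ γ := by rw [h8]; ring
      _ ≤ (3*C0) * (3*C0)⁻¹ * d ^ γ := by
          exact mul_le_mul_of_nonneg_right (mul_le_mul_of_nonneg_left h7 hDpos.le)
            (Real.rpow_nonneg hd0.le _)
      _ = d ^ γ := by rw [mul_inv_cancel₀ hDpos.ne', one_mul]
end
end
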